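/- arXiv:2206.02758 — 14 statements merged into one kernel-verified Lean document; each statement's English description precedes it below -/
import Mathlib

section
/- Let λ : ℕ → ℝ with λ(0) = 1, and let n ≥ 1. Then V_n[Λ] = T_n[Λ] · ([1] ⊕ V_{n-1}[Λ]), where [1] ⊕ V_{n-1}[Λ] denotes the (n+1)×(n+1) block-diagonal matrix whose top-left 1×1 block is 1 and whose bottom-right n×n block is V_{n-1}[Λ]. -/
open Finset Matrix

/-- The array `a(i,j)` associated with the sequence `lam`:
`a(i,0) = lam i`, and for `j ≥ 1`, `a(i,j) = Σ_{l=j-1}^{i-1} lam(i-1-l)·a(l,j-1)`. -/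
def vertRecEntry (lam : ℕ → ℝ) : ℕ → ℕ → ℝ
  | i, 0 => lam i
  | i, j + 1 => ∑ l ∈ Finset.Ico j i, lam (i - 1 - l) * vertRecEntry lam l j

/-- The vertically-recurrent matrix `V_n[Λ]`. -/
def vertRecMatrix (lam : ℕ → ℝ) (n : ℕ) : Matrix (Fin (n + 1)) (Fin (n + 1)) ℝ :=
  Matrix.of fun i j => vertRecEntry lam i j

/-- The lower-triangular Toeplitz matrix `T_m[Λ]` of size `(m+1) × (m+1)`. -/
def toeplitzMatrix (lam : ℕ → ℝ) (m : ℕ) : Matrix (Fin (m + 1)) (Fin (m + 1)) ℝ :=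
  Matrix.of fun i j => if (j : ℕ) ≤ (i : ℕ) then lam ((i : ℕ) - (j : ℕ)) else 0

/-- The block-diagonal matrix `[1] ⊕ V_{n-1}[Λ]` of size `(n+1) × (n+1)` (for `n ≥ 1`):
top-left `1×1` block equal to `1`, bottom-right `n×n` block equal to `V_{n-1}[Λ]`. -/
def oneOplusV (lam : ℕ → ℝ) (n : ℕ) : Matrix (Fin (n + 1)) (Fin (n + 1)) ℝ :=
  Matrix.of fun i j =>
    if (i : ℕ) = 0 then (if (j : ℕ) = 0 then 1 else 0)
    else if (j : ℕ) = 0 then 0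
    else vertRecEntry lam ((i : ℕ) - 1) ((j : ℕ) - 1)


lemma vertRecEntry_eq_zero (lam : ℕ → ℝ) {l j : ℕ} (h : l < j + 1) :
    vertRecEntry lam l (j + 1) = 0 := by
  unfold vertRecEntry
  rw [Finset.Ico_eq_empty (by omega), Finset.sum_empty]

/-- Multiplicative decomposition: `V_n[Λ] = T_n[Λ] · ([1] ⊕ V_{n-1}[Λ])`. -/
theorem vertRecMatrix_mult_decomposition (lam : ℕ → ℝ) (hlam : lam 0 = 1)
    (n : ℕ) (hn : 1 ≤ n) :
    vertRecMatrix lam n = toeplitzMatrix lam n * oneOplusV lam n := by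
  ext i j
  rw [Matrix.mul_apply, Fin.sum_univ_succ]
  rcases Nat.eq_zero_or_pos (j : ℕ) with hj | hj
  · -- column 0
    have hz : ∀ k : Fin n, toeplitzMatrix lam n i k.succ * oneOplusV lam n k.succ j = 0 := by
      intro k
      have : ((k.succ : Fin (n+1)) : ℕ) ≠ 0 := by simp [Fin.val_succ]
      simp [oneOplusV, this, hj, (Fin.ext hj : j = 0)]
    rw [Finset.sum_congr rfl (fun k _ => hz k), Finset.sum_const_zero, add_zero]
    simp [vertRecMatrix, toeplitzMatrix, oneOplusV, hj, vertRecEntry, (Fin.ext hj : j = 0)]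
  · -- column ≥ 1
    obtain ⟨m, hm⟩ : ∃ m, (j : ℕ) = m + 1 := ⟨(j : ℕ) - 1, by omega⟩
    have hi : (i : ℕ) ≤ n := Nat.lt_succ_iff.mp i.isLt
    have hfirst : toeplitzMatrix lam n i 0 * oneOplusV lam n 0 j = 0 := by
      have hj0 : j ≠ 0 := by rintro rfl; simp at hj
      simp [oneOplusV, hm, hj0]
    rw [hfirst, zero_add]
    have key : ∀ k : Fin n,
        toeplitzMatrix lam n i k.succ * oneOplusV lam n k.succ j =
          (if (k : ℕ) + 1 ≤ (i : ℕ) ∧ m ≤ (k : ℕ) then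
            lam ((i : ℕ) - 1 - (k : ℕ)) * vertRecEntry lam (k : ℕ) m else 0) := by
      intro k
      have hkv : ((k.succ : Fin (n+1)) : ℕ) = (k : ℕ) + 1 := by simp [Fin.val_succ]
      simp only [toeplitzMatrix, oneOplusV, Matrix.of_apply, hkv, hm,
        Nat.succ_ne_zero, if_false, Nat.add_sub_cancel]
      by_cases h1 : (k : ℕ) + 1 ≤ (i : ℕ)
      · by_cases h2 : m ≤ (k : ℕ)
        · rw [if_pos h1, if_pos ⟨h1, h2⟩]
          congr 2
          omega
        · rw [if_pos h1, if_neg (fun h => h2 h.2)]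
          obtain ⟨m', hm'⟩ : ∃ m', m = m' + 1 := ⟨m - 1, by omega⟩
          rw [hm', vertRecEntry_eq_zero lam (by omega), mul_zero]
      · rw [if_neg h1, if_neg (fun h => h1 h.1), zero_mul]
    rw [Finset.sum_congr rfl (fun k _ => key k)]
    rw [Fin.sum_univ_eq_sum_range (fun l => if l + 1 ≤ (i : ℕ) ∧ m ≤ l then
      lam ((i : ℕ) - 1 - l) * vertRecEntry lam l m else 0)]
    rw [Finset.sum_ite, Finset.sum_const_zero, add_zero]
    have hfil : (Finset.range n).filter (fun l => l + 1 ≤ (i : ℕ) ∧ m ≤ l)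
        = Finset.Ico m (i : ℕ) := by
      ext l
      simp only [Finset.mem_filter, Finset.mem_range, Finset.mem_Ico]
      omega
    rw [hfil]
    show vertRecEntry lam (i : ℕ) ((j : ℕ))
      = ∑ l ∈ Finset.Ico m (i : ℕ), lam ((i : ℕ) - 1 - l) * vertRecEntry lam l m
    rw [hm]
    rfl
end

section
/- Let λ : ℕ → ℝ with λ(0) = 1, and let n ≥ 1. Then V_n[Λ] is invertible, each block matrix T̄_k[Λ] (0 ≤ k ≤ n-1) is invertible, and V_n[Λ]⁻¹ = T̄_{n-1}[Λ]⁻¹ · T̄_{n-2}[Λ]⁻¹ · ⋯ · T̄_0[Λ]⁻¹. -/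
open Finset Matrix

/-- The `(n+1) × (n+1)` block-diagonal matrix `T̄_k[Λ]`: top-left `k×k` block equal to the
identity `I_k`, bottom-right `(n-k+1)×(n-k+1)` block equal to the lower-triangular Toeplitz
matrix `T_{n-k}[Λ]` with entries `lam (i-j)` on and below the diagonal. -/
def toeplitzBlock (lam : ℕ → ℝ) (n k : ℕ) : Matrix (Fin (n + 1)) (Fin (n + 1)) ℝ :=
  Matrix.of fun i j =>
    if (i : ℕ) < k ∨ (j : ℕ) < k then (if i = j then 1 else 0)
    else if (j : ℕ) ≤ (i : ℕ) then lam ((i : ℕ) - (j : ℕ)) else 0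

/-- ℕ-indexed version of the entries of `toeplitzBlock`. -/
def tbEnt (lam : ℕ → ℝ) (k i j : ℕ) : ℝ :=
  if i < k ∨ j < k then (if i = j then 1 else 0)
  else if j ≤ i then lam (i - j) else 0

/-- Entries of the partial product `T̄_0 ⋯ T̄_{m-1}` (for `m ≥ 1`). -/
def pEnt (lam : ℕ → ℝ) (m i j : ℕ) : ℝ :=
  if j < m then vertRecEntry lam i j
  else if j ≤ i then vertRecEntry lam (i - j + (m - 1)) (m - 1) else 0

lemma toeplitzBlock_apply (lam : ℕ → ℝ) (n k : ℕ) (i j : Fin (n + 1)) :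
    toeplitzBlock lam n k i j = tbEnt lam k (i : ℕ) (j : ℕ) := by
  simp only [toeplitzBlock, tbEnt, Matrix.of_apply, Fin.ext_iff]

lemma vre_eq_zero (lam : ℕ → ℝ) {i j : ℕ} (h : i < j) : vertRecEntry lam i j = 0 := by
  cases j with
  | zero => omega
  | succ j =>
    simp only [vertRecEntry]
    rw [Finset.Ico_eq_empty (by omega), Finset.sum_empty]

lemma vre_core (lam : ℕ → ℝ) (x m : ℕ) :
    ∑ t ∈ Finset.range (x + 1), vertRecEntry lam (x - t + m) m * lam t
      = vertRecEntry lam (x + m + 1) (m + 1) := by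
  have h1 : vertRecEntry lam (x + m + 1) (m + 1)
      = ∑ l ∈ Finset.Ico m (x + m + 1), lam (x + m + 1 - 1 - l) * vertRecEntry lam l m := by
    simp only [vertRecEntry]
  rw [h1, Finset.sum_Ico_eq_sum_range]
  have h2 : x + m + 1 - m = x + 1 := by omega
  rw [h2]
  conv_rhs => rw [← Finset.sum_range_reflect]
  refine Finset.sum_congr rfl fun t ht => ?_
  rw [Finset.mem_range] at ht
  have e1 : x + m + 1 - 1 - (m + (x + 1 - 1 - t)) = t := by omega
  have e2 : m + (x + 1 - 1 - t) = x - t + m := by omega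
  rw [e1, e2, mul_comm]

lemma step_sum (lam : ℕ → ℝ) (n m i j : ℕ) (hm : 1 ≤ m) (hi : i ≤ n) (hj : j ≤ n) :
    ∑ l ∈ Finset.range (n + 1), pEnt lam m i l * tbEnt lam m l j
      = pEnt lam (m + 1) i j := by
  by_cases hjm : j < m
  · rw [Finset.sum_eq_single j]
    · have ht : tbEnt lam m j j = 1 := by
        simp only [tbEnt]
        rw [if_pos (Or.inr hjm)]
        simp
      rw [ht, mul_one]
      simp only [pEnt]
      rw [if_pos hjm, if_pos (show j < m + 1 by omega)]
    · intro b _ hbj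
      have ht : tbEnt lam m b j = 0 := by
        simp only [tbEnt, if_pos (Or.inr hjm)]
        rw [if_neg hbj]
      rw [ht, mul_zero]
    · intro h; exact absurd (Finset.mem_range.2 (by omega)) h
  · push_neg at hjm
    have hzero : ∀ l, ¬ (j ≤ l ∧ l ≤ i) → pEnt lam m i l * tbEnt lam m l j = 0 := by
      intro l hl
      rcases Nat.lt_or_ge l m with hlm | hlm
      · have ht : tbEnt lam m l j = 0 := by
          simp only [tbEnt, if_pos (Or.inl hlm)]
          rw [if_neg (show ¬ l = j by omega)]
        rw [ht, mul_zero]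
      · rcases Nat.lt_or_ge l j with hlj | hlj
        · have ht : tbEnt lam m l j = 0 := by
            simp only [tbEnt]
            rw [if_neg (by omega), if_neg (by omega)]
          rw [ht, mul_zero]
        · have hil : i < l := by omega
          have hp : pEnt lam m i l = 0 := by
            simp only [pEnt]
            rw [if_neg (by omega), if_neg (by omega)]
          rw [hp, zero_mul]
    have hval : ∀ l ∈ Finset.Ico j (i + 1),
        pEnt lam m i l * tbEnt lam m l j
          = vertRecEntry lam (i - l + (m - 1)) (m - 1) * lam (l - j) := by
      intro l hl
      rw [Finset.mem_Ico] at hl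
      have ht : tbEnt lam m l j = lam (l - j) := by
        simp only [tbEnt]
        rw [if_neg (by omega), if_pos hl.1]
      have hp : pEnt lam m i l = vertRecEntry lam (i - l + (m - 1)) (m - 1) := by
        simp only [pEnt]
        rw [if_neg (by omega), if_pos (by omega)]
      rw [hp, ht]
    rcases Nat.lt_or_ge i j with hij | hij
    · rw [Finset.sum_eq_zero (fun l _ => hzero l (by omega))]
      symm
      simp only [pEnt]
      split_ifs with hj1 hj2
      · exact vre_eq_zero lam (by omega)
      · exact absurd hj2 (by omega)
      · rfl
    · have hss : Finset.Ico j (i + 1) ⊆ Finset.range (n + 1) := by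
        intro l hl
        rw [Finset.mem_Ico] at hl
        exact Finset.mem_range.2 (by omega)
      have h3 : i + 1 - j = (i - j) + 1 := by omega
      have h4 : ∀ t ∈ Finset.range (i - j + 1),
          vertRecEntry lam (i - (j + t) + (m - 1)) (m - 1) * lam (j + t - j)
            = vertRecEntry lam ((i - j) - t + (m - 1)) (m - 1) * lam t := by
        intro t ht
        rw [Finset.mem_range] at ht
        have e1 : i - (j + t) = (i - j) - t := by omega
        have e2 : j + t - j = t := by omega
        rw [e1, e2]
      calc ∑ l ∈ Finset.range (n + 1), pEnt lam m i l * tbEnt lam m l j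
          = ∑ l ∈ Finset.Ico j (i + 1), pEnt lam m i l * tbEnt lam m l j :=
            (Finset.sum_subset hss (fun l _ hnl => hzero l (by
              rw [Finset.mem_Ico] at hnl; omega))).symm
        _ = ∑ l ∈ Finset.Ico j (i + 1),
              vertRecEntry lam (i - l + (m - 1)) (m - 1) * lam (l - j) :=
            Finset.sum_congr rfl hval
        _ = ∑ t ∈ Finset.range (i + 1 - j),
              vertRecEntry lam (i - (j + t) + (m - 1)) (m - 1) * lam (j + t - j) :=
            by rw [Finset.sum_Ico_eq_sum_range]
        _ = ∑ t ∈ Finset.range ((i - j) + 1),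
              vertRecEntry lam ((i - j) - t + (m - 1)) (m - 1) * lam t := by
            rw [h3]; exact Finset.sum_congr rfl h4
        _ = vertRecEntry lam ((i - j) + (m - 1) + 1) ((m - 1) + 1) := vre_core lam (i - j) (m - 1)
        _ = pEnt lam (m + 1) i j := by
            have e3 : m - 1 + 1 = m := by omega
            have e4 : i - j + (m - 1) + 1 = i - j + m := by omega
            rw [e3, e4]
            symm
            simp only [pEnt]
            by_cases hj1 : j < m + 1
            · have hjm' : j = m := by omega
              rw [if_pos hj1, hjm']
              have e5 : i - m + m = i := by omega
              rw [e5]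
            · rw [if_neg hj1, if_pos hij, Nat.add_sub_cancel]

lemma prod_entry (lam : ℕ → ℝ) (n : ℕ) :
    ∀ m, 1 ≤ m → ∀ i j : Fin (n + 1),
      (((List.range m).map (toeplitzBlock lam n)).prod) i j = pEnt lam m (i : ℕ) (j : ℕ) := by
  intro m hm
  induction m, hm using Nat.le_induction with
  | base =>
    intro i j
    have h1 : ((List.range 1).map (toeplitzBlock lam n)).prod = toeplitzBlock lam n 0 := by
      rw [show List.range 1 = [0] from rfl, List.map_cons, List.map_nil, List.prod_cons,
        List.prod_nil, mul_one]
    rw [h1, toeplitzBlock_apply]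
    simp only [tbEnt, pEnt]
    rw [if_neg (show ¬ ((i : ℕ) < 0 ∨ (j : ℕ) < 0) by omega)]
    by_cases hj0 : (j : ℕ) < 1
    · rw [if_pos hj0]
      have hj : (j : ℕ) = 0 := by omega
      rw [hj, if_pos (Nat.zero_le _), Nat.sub_zero]
      simp only [vertRecEntry]
    · rw [if_neg hj0]
      by_cases hji : (j : ℕ) ≤ (i : ℕ)
      · rw [if_pos hji, if_pos hji]
        show lam ((i : ℕ) - (j : ℕ)) = vertRecEntry lam ((i : ℕ) - (j : ℕ) + (1 - 1)) (1 - 1)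
        norm_num
        simp only [vertRecEntry]
      · rw [if_neg hji, if_neg hji]
  | succ m hm ih =>
    intro i j
    rw [List.range_succ, List.map_append, List.prod_append]
    simp only [List.map_cons, List.map_nil, List.prod_cons, List.prod_nil, mul_one]
    rw [Matrix.mul_apply]
    rw [Finset.sum_congr rfl (fun l _ => by rw [ih i l, toeplitzBlock_apply])]
    rw [Fin.sum_univ_eq_sum_range (fun l => pEnt lam m (i : ℕ) l * tbEnt lam m l (j : ℕ)) (n + 1)]
    exact step_sum lam n m i j hm (Nat.lt_succ_iff.1 i.isLt) (Nat.lt_succ_iff.1 j.isLt)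

lemma tb_blockTriangular (lam : ℕ → ℝ) (n k : ℕ) :
    (toeplitzBlock lam n k).BlockTriangular OrderDual.toDual := by
  intro i j hij
  have hij' : i < j := OrderDual.toDual_lt_toDual.mp hij
  have hv : (i : ℕ) < (j : ℕ) := hij'
  simp only [toeplitzBlock, Matrix.of_apply]
  by_cases h1 : (i : ℕ) < k ∨ (j : ℕ) < k
  · rw [if_pos h1, if_neg (show ¬ i = j from ne_of_lt hij')]
  · rw [if_neg h1, if_neg (show ¬ (j : ℕ) ≤ (i : ℕ) by omega)]

lemma tb_det (lam : ℕ → ℝ) (hlam : lam 0 = 1) (n k : ℕ) :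
    (toeplitzBlock lam n k).det = 1 := by
  rw [Matrix.det_of_lowerTriangular _ (tb_blockTriangular lam n k)]
  apply Finset.prod_eq_one
  intro i _
  simp only [toeplitzBlock, Matrix.of_apply]
  by_cases h : (i : ℕ) < k
  · rw [if_pos (Or.inl h)]; simp
  · rw [if_neg (by omega), if_pos le_rfl, Nat.sub_self, hlam]

lemma tb_isUnit (lam : ℕ → ℝ) (hlam : lam 0 = 1) (n k : ℕ) :
    IsUnit (toeplitzBlock lam n k) :=
  (Matrix.isUnit_iff_isUnit_det _).2 (by rw [tb_det lam hlam n k]; exact isUnit_one)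

lemma left_inv_prod (lam : ℕ → ℝ) (hlam : lam 0 = 1) (n : ℕ) : ∀ m,
    (((List.range m).reverse.map fun k => (toeplitzBlock lam n k)⁻¹).prod)
      * ((List.range m).map (toeplitzBlock lam n)).prod = 1 := by
  intro m
  induction m with
  | zero => simp
  | succ m ih =>
    rw [List.range_succ]
    simp only [List.reverse_append, List.reverse_cons, List.reverse_nil, List.nil_append,
      List.singleton_append, List.map_cons, List.map_append, List.map_nil, List.prod_cons,
      List.prod_append, List.prod_nil, mul_one]
    rw [mul_assoc, ← mul_assoc (((List.range m).reverse.map fun k => (toeplitzBlock lam n k)⁻¹).prod)]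
    rw [ih, one_mul]
    exact Matrix.nonsing_inv_mul _ (by rw [tb_det lam hlam n m]; exact isUnit_one)

/-- `V_n[Λ]` and each `T̄_k[Λ]` (`0 ≤ k ≤ n-1`) are invertible, and
`V_n[Λ]⁻¹ = T̄_{n-1}[Λ]⁻¹ · T̄_{n-2}[Λ]⁻¹ · ⋯ · T̄_0[Λ]⁻¹`. -/
theorem vertRecMatrix_inv_eq_prod_toeplitzBlock_invs (lam : ℕ → ℝ) (hlam : lam 0 = 1)
    (n : ℕ) (hn : 1 ≤ n) :
    IsUnit (vertRecMatrix lam n) ∧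
    (∀ k, k ≤ n - 1 → IsUnit (toeplitzBlock lam n k)) ∧
    (vertRecMatrix lam n)⁻¹ =
      ((List.range n).reverse.map (fun k => (toeplitzBlock lam n k)⁻¹)).prod := by
  have hV : vertRecMatrix lam n = ((List.range n).map (toeplitzBlock lam n)).prod := by
    ext i j
    rw [prod_entry lam n n hn i j]
    show vertRecEntry lam (i : ℕ) (j : ℕ) = pEnt lam n (i : ℕ) (j : ℕ)
    simp only [pEnt]
    by_cases h1 : (j : ℕ) < n
    · rw [if_pos h1]
    · have hjn : (j : ℕ) = n := by omega
      rw [if_neg h1]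
      by_cases h2 : (j : ℕ) ≤ (i : ℕ)
      · have hin : (i : ℕ) = n := by omega
        rw [if_pos h2]
        obtain ⟨p, rfl⟩ : ∃ p, n = p + 1 := ⟨n - 1, by omega⟩
        have e2 : p + 1 - 1 = p := by omega
        rw [e2]
        have e1 : (i : ℕ) - (j : ℕ) + p = p := by omega
        rw [e1, hin, hjn]
        simp only [vertRecEntry]
        rw [show Finset.Ico p (p + 1) = {p} by rw [Finset.Ico_add_one_right_eq_Icc, Finset.Icc_self],
          Finset.sum_singleton]
        rw [show p + 1 - 1 - p = 0 by omega, hlam, one_mul]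
      · rw [if_neg h2]
        exact vre_eq_zero lam (by omega)
  have hUk : ∀ k, IsUnit (toeplitzBlock lam n k) := tb_isUnit lam hlam n
  have hUV : IsUnit (vertRecMatrix lam n) := by
    rw [hV]
    apply List.prod_isUnit
    intro M hM
    obtain ⟨k, -, rfl⟩ := List.mem_map.1 hM
    exact hUk k
  refine ⟨hUV, fun k _ => hUk k, ?_⟩
  apply Matrix.inv_eq_left_inv
  rw [hV]
  exact left_inv_prod lam hlam n n
end

section
/- Let α, α', β, β' be real numbers and let a, b : ℕ × ℕ → ℝ satisfy: a(n,k) = α·a(n-1,k-1) + β·a(n-1,k) and b(n,k) = α'·b(n-1,k-1) + β'·b(n-1,k) for all n ≥ k ≥ 1; a(n,0) = 1 and b(n,0) = 1 for all n ≥ 0; and a(n,k) = 0 = b(n,k) for k > n. Define c(n,k) = Σ_{l=k}^{n} a(n,l)·b(l,k). Then c(n,k) = α·α'·c(n-1,k-1) + (β + α·β')·c(n-1,k) for all n ≥ k ≥ 1, c(n,0) = Σ_{i=0}^{n} a(n,i) for all n ≥ 0, and c(n,k) = 0 for k > n. -/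
open Finset

/-- Product of two lower-triangular arrays satisfying two-term recurrences:
if `a(n,k) = α·a(n-1,k-1) + β·a(n-1,k)` and `b(n,k) = α'·b(n-1,k-1) + β'·b(n-1,k)`,
then `c(n,k) = Σ_{l=k}^n a(n,l)·b(l,k)` satisfies
`c(n,k) = α·α'·c(n-1,k-1) + (β + α·β')·c(n-1,k)`, with `c(n,0) = Σ_{i=0}^n a(n,i)`
and `c(n,k) = 0` for `k > n`. -/
theorem product_of_two_term_recurrence_arrays
    (α α' β β' : ℝ) (a b : ℕ × ℕ → ℝ)
    (ha : ∀ n k : ℕ, 1 ≤ k → k ≤ n →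
      a (n, k) = α * a (n - 1, k - 1) + β * a (n - 1, k))
    (hb : ∀ n k : ℕ, 1 ≤ k → k ≤ n →
      b (n, k) = α' * b (n - 1, k - 1) + β' * b (n - 1, k))
    (ha0 : ∀ n : ℕ, a (n, 0) = 1) (hb0 : ∀ n : ℕ, b (n, 0) = 1)
    (haz : ∀ n k : ℕ, n < k → a (n, k) = 0)
    (hbz : ∀ n k : ℕ, n < k → b (n, k) = 0)
    (c : ℕ × ℕ → ℝ)
    (hc : ∀ n k : ℕ, c (n, k) = ∑ l ∈ Finset.Icc k n, a (n, l) * b (l, k)) :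
    (∀ n k : ℕ, 1 ≤ k → k ≤ n →
      c (n, k) = α * α' * c (n - 1, k - 1) + (β + α * β') * c (n - 1, k)) ∧
    (∀ n : ℕ, c (n, 0) = ∑ i ∈ Finset.range (n + 1), a (n, i)) ∧
    (∀ n k : ℕ, n < k → c (n, k) = 0) := by
  refine ⟨?_, ?_, ?_⟩
  · intro n k hk hkn
    obtain ⟨j, rfl⟩ : ∃ j, k = j + 1 := ⟨k - 1, by omega⟩
    obtain ⟨m, rfl⟩ : ∃ m, n = m + 1 := ⟨n - 1, by omega⟩
    have hjm : j ≤ m := by omega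
    simp only [Nat.add_sub_cancel]
    rw [hc, hc, hc]
    have hreindex : ∀ (g : ℕ → ℝ),
        ∑ l ∈ Icc (j + 1) (m + 1), g l = ∑ l ∈ Icc j m, g (l + 1) := by
      intro g
      rw [show Icc (j + 1) (m + 1) = (Icc j m).image (· + 1) by
        ext x
        simp only [Finset.mem_image, mem_Icc]
        constructor
        · rintro ⟨h1, h2⟩; exact ⟨x - 1, ⟨by omega, by omega⟩, by omega⟩
        · rintro ⟨y, ⟨h1, h2⟩, rfl⟩; omega]
      rw [Finset.sum_image (by intro x _ y _ h; simp only at h; omega)]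
    have step1 : ∀ l ∈ Icc (j + 1) (m + 1),
        a (m + 1, l) * b (l, j + 1)
          = α * (a (m, l - 1) * b (l, j + 1)) + β * (a (m, l) * b (l, j + 1)) := by
      intro l hl
      simp only [mem_Icc] at hl
      rw [ha (m + 1) l (by omega) (by omega)]
      simp only [Nat.add_sub_cancel]
      ring
    rw [Finset.sum_congr rfl step1, Finset.sum_add_distrib,
      ← Finset.mul_sum, ← Finset.mul_sum]
    rw [hreindex (fun l => a (m, l - 1) * b (l, j + 1))]
    simp only [Nat.add_sub_cancel]
    have step2 : ∀ l ∈ Icc j m,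
        a (m, l) * b (l + 1, j + 1)
          = α' * (a (m, l) * b (l, j)) + β' * (a (m, l) * b (l, j + 1)) := by
      intro l hl
      simp only [mem_Icc] at hl
      rw [hb (l + 1) (j + 1) (by omega) (by omega)]
      simp only [Nat.add_sub_cancel]
      ring
    rw [Finset.sum_congr rfl step2, Finset.sum_add_distrib,
      ← Finset.mul_sum, ← Finset.mul_sum]
    have hsplit : ∑ l ∈ Icc j m, a (m, l) * b (l, j + 1)
        = ∑ l ∈ Icc (j + 1) m, a (m, l) * b (l, j + 1) := by
      rw [show Icc j m = insert j (Icc (j + 1) m) by ext x; simp [mem_insert]; omega]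
      rw [Finset.sum_insert (by simp), hbz j (j + 1) (by omega)]
      ring
    have htop : ∑ l ∈ Icc (j + 1) (m + 1), a (m, l) * b (l, j + 1)
        = ∑ l ∈ Icc (j + 1) m, a (m, l) * b (l, j + 1) := by
      rw [Finset.sum_Icc_succ_top (by omega), haz m (m + 1) (by omega)]
      ring
    rw [hsplit, htop]
    ring
  · intro n
    rw [hc]
    rw [show Finset.Icc 0 n = Finset.range (n + 1) by ext x; simp [Nat.lt_succ_iff]]
    exact Finset.sum_congr rfl fun i _ => by rw [hb0, mul_one]
  · intro n k hnk
    rw [hc, Finset.Icc_eq_empty (by omega), Finset.sum_empty]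
end

section
/- Let α, β be real numbers, n ≥ 1, and let A be an (n+1)×(n+1) real matrix satisfying A_{i,j} = 0 for j > i and A_{i,j} = α·A_{i-1,j-1} + β·A_{i-1,j} for all n ≥ i ≥ j ≥ 1. Then for every m ≥ 1, the matrix power A^m satisfies (A^m)_{i,j} = 0 for j > i and (A^m)_{i,j} = α^m·(A^m)_{i-1,j-1} + β·(Σ_{r=0}^{m-1} α^r)·(A^m)_{i-1,j} for all n ≥ i ≥ j ≥ 1. -/
open Finset Matrix

/-- If a lower-triangular `(n+1)×(n+1)` real matrix `A` satisfies the two-term recurrence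
`A_{i,j} = α·A_{i-1,j-1} + β·A_{i-1,j}` for `n ≥ i ≥ j ≥ 1`, then for every `m ≥ 1`,
`A^m` is lower triangular and satisfies
`(A^m)_{i,j} = α^m·(A^m)_{i-1,j-1} + β·(Σ_{r=0}^{m-1} α^r)·(A^m)_{i-1,j}`. -/
theorem pow_of_two_term_recurrence_matrix
    (α β : ℝ) (n : ℕ) (hn : 1 ≤ n) (A : Matrix (Fin (n + 1)) (Fin (n + 1)) ℝ)
    (hAz : ∀ i j : Fin (n + 1), (i : ℕ) < (j : ℕ) → A i j = 0)
    (hArec : ∀ i j : Fin (n + 1), 1 ≤ (j : ℕ) → (j : ℕ) ≤ (i : ℕ) →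
      A i j = α * A (i - 1) (j - 1) + β * A (i - 1) j) :
    ∀ m : ℕ, 1 ≤ m →
      (∀ i j : Fin (n + 1), (i : ℕ) < (j : ℕ) → (A ^ m) i j = 0) ∧
      (∀ i j : Fin (n + 1), 1 ≤ (j : ℕ) → (j : ℕ) ≤ (i : ℕ) →
        (A ^ m) i j = α ^ m * (A ^ m) (i - 1) (j - 1) +
          β * (∑ r ∈ Finset.range m, α ^ r) * (A ^ m) (i - 1) j) := by
  intro m hm
  induction m, hm using Nat.le_induction with
  | base =>
      refine ⟨fun i j hij => by simpa using hAz i j hij, fun i j h1 h2 => ?_⟩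
      simp only [pow_one, Finset.sum_range_one, pow_zero]
      rw [hArec i j h1 h2]; ring
  | succ m hm ih =>
      obtain ⟨ihz, ihrec⟩ := ih
      have hz : ∀ i j : Fin (n + 1), (i : ℕ) < (j : ℕ) → (A ^ (m + 1)) i j = 0 := by
        intro i j hij
        rw [pow_succ', Matrix.mul_apply]
        apply Finset.sum_eq_zero
        intro k _
        by_cases hk : (k : ℕ) ≤ (i : ℕ)
        · rw [ihz k j (lt_of_le_of_lt hk hij), mul_zero]
        · rw [hAz i k (lt_of_not_ge hk), zero_mul]
      refine ⟨hz, ?_⟩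
      intro i j hj1 hji
      have hj0 : j ≠ 0 := by
        intro h; rw [h] at hj1; simp at hj1
      have hi0 : i ≠ 0 := by
        intro h; rw [h] at hji; simp at hji; omega
      have hj' : ((j - 1 : Fin (n + 1)) : ℕ) = (j : ℕ) - 1 := by
        rw [Fin.coe_sub_one, if_neg hj0]
      have hi' : ((i - 1 : Fin (n + 1)) : ℕ) = (i : ℕ) - 1 := by
        rw [Fin.coe_sub_one, if_neg hi0]
      set X := A ^ m with hXdef
      set i' := i - 1 with hi'def
      set j' := j - 1 with hj'def
      -- termwise recurrence for A
      have key1 : ∀ k : Fin (n + 1),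
          A i k * X k j = α * (A i' (k - 1) * X k j) + β * (A i' k * X k j) := by
        intro k
        by_cases hkj : (j : ℕ) ≤ (k : ℕ)
        · by_cases hki : (k : ℕ) ≤ (i : ℕ)
          · rw [hArec i k (le_trans hj1 hkj) hki]; ring
          · have hk0 : k ≠ 0 := by
              intro h; rw [h] at hkj; simp at hkj; omega
            have hk' : ((k - 1 : Fin (n + 1)) : ℕ) = (k : ℕ) - 1 := by
              rw [Fin.coe_sub_one, if_neg hk0]
            have h1 : A i k = 0 := hAz i k (lt_of_not_ge hki)
            have h2 : A i' (k - 1) = 0 := by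
              apply hAz; rw [hi', hk']; omega
            have h3 : A i' k = 0 := by
              apply hAz; rw [hi']; omega
            rw [h1, h2, h3]; ring
        · have h0 : X k j = 0 := ihz k j (lt_of_not_ge hkj)
          rw [h0]; ring
      -- termwise recurrence for X = A^m after shift
      have key2 : ∀ k : Fin (n + 1),
          A i' k * X (k + 1) j =
            α ^ m * (A i' k * X k j') +
              (β * ∑ r ∈ Finset.range m, α ^ r) * (A i' k * X k j) := by
        intro k
        by_cases hk : (k : ℕ) < n
        · have hk1 : ((k + 1 : Fin (n + 1)) : ℕ) = (k : ℕ) + 1 := by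
            rw [Fin.val_add_one, if_neg]
            intro h; rw [h] at hk; simp at hk
          by_cases hjk : (j : ℕ) ≤ (k : ℕ) + 1
          · have := ihrec (k + 1) j hj1 (by rw [hk1]; exact hjk)
            rw [add_sub_cancel_right] at this
            rw [this]; ring
          · have h1 : X (k + 1) j = 0 := by
              apply ihz; rw [hk1]; omega
            have h2 : X k j' = 0 := by
              apply ihz; rw [hj']; omega
            have h3 : X k j = 0 := by
              apply ihz; omega
            rw [h1, h2, h3]; ring
        · have hkn : (k : ℕ) = n := by omega
          have h1 : A i' k = 0 := by
            apply hAz; rw [hi']; omega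
          rw [h1]; ring
      rw [pow_succ']
      simp only [Matrix.mul_apply]
      have e1 : ∑ k, A i k * X k j =
          α * ∑ k, A i' (k - 1) * X k j + β * ∑ k, A i' k * X k j := by
        rw [Finset.sum_congr rfl (fun k _ => key1 k), Finset.sum_add_distrib,
          ← Finset.mul_sum, ← Finset.mul_sum]
      have e2 : ∑ k, A i' (k - 1) * X k j = ∑ k, A i' k * X (k + 1) j := by
        rw [← Equiv.sum_comp (Equiv.addRight (1 : Fin (n + 1)))
          (fun k => A i' (k - 1) * X k j)]
        refine Finset.sum_congr rfl fun k _ => ?_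
        simp [add_sub_cancel_right]
      have e3 : ∑ k, A i' k * X (k + 1) j =
          α ^ m * ∑ k, A i' k * X k j' +
            (β * ∑ r ∈ Finset.range m, α ^ r) * ∑ k, A i' k * X k j := by
        rw [Finset.sum_congr rfl (fun k _ => key2 k), Finset.sum_add_distrib,
          ← Finset.mul_sum, ← Finset.mul_sum]
      have hσ : ∑ r ∈ Finset.range (m + 1), α ^ r =
          α * (∑ r ∈ Finset.range m, α ^ r) + 1 := by
        rw [Finset.sum_range_succ', pow_zero, Finset.mul_sum]
        simp [pow_succ']
      rw [e1, e2, e3, hσ]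
      ring
end

section
/- Let λ be a real number, n ≥ 1, and let A be an (n+1)×(n+1) real matrix satisfying A_{i,j} = 0 for j > i and A_{i,j} = λ·A_{i-1,j-1} + A_{i-1,j} for all n ≥ i ≥ j ≥ 1 (the two-term recurrence arising from the vertically-recurrent matrix with constant associated sequence λ). Then for every m ≥ 1, writing β_m = Σ_{r=0}^{m-1} λ^r, the matrix power A^m satisfies the generalized vertical recurrence (A^m)_{i,j} = Σ_{l=j-1}^{i-1} λ^m · β_m^{i-1-l} · (A^m)_{l,j-1} for all n ≥ i ≥ j ≥ 1; that is, A^m is vertically recurrent with associated sequence λ^m·β_m^{j}. -/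
open Finset Matrix
open Fin.NatCast

/-- Powers of a lower-triangular matrix are lower-triangular. -/
lemma auxTri {n : ℕ} (A : Matrix (Fin (n + 1)) (Fin (n + 1)) ℝ)
    (hAz : ∀ i j : Fin (n + 1), (i : ℕ) < (j : ℕ) → A i j = 0) :
    ∀ m : ℕ, ∀ i j : Fin (n + 1), (i : ℕ) < (j : ℕ) → (A ^ m) i j = 0 := by
  intro m
  induction m with
  | zero =>
    intro i j h
    have hij : i ≠ j := by
      intro he; rw [he] at h; exact lt_irrefl _ h
    simp [Matrix.one_apply, hij]
  | succ m ih =>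
    intro i j h
    rw [pow_succ, Matrix.mul_apply]
    apply Finset.sum_eq_zero
    intro k _
    rcases le_or_gt (k : ℕ) (i : ℕ) with hk | hk
    · rw [hAz k j (lt_of_le_of_lt hk h), mul_zero]
    · rw [ih i k hk, zero_mul]

/-- The two-term recurrence for powers. -/
lemma auxTwo (lam : ℝ) {n : ℕ} (A : Matrix (Fin (n + 1)) (Fin (n + 1)) ℝ)
    (hAz : ∀ i j : Fin (n + 1), (i : ℕ) < (j : ℕ) → A i j = 0)
    (hArec : ∀ i j : Fin (n + 1), 1 ≤ (j : ℕ) → (j : ℕ) ≤ (i : ℕ) →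
      A i j = lam * A (i - 1) (j - 1) + A (i - 1) j) :
    ∀ m : ℕ, 1 ≤ m → ∀ i j : Fin (n + 1), 1 ≤ (i : ℕ) → 1 ≤ (j : ℕ) →
      (A ^ m) i j = lam ^ m * (A ^ m) (i - 1) (j - 1)
        + (∑ r ∈ Finset.range m, lam ^ r) * (A ^ m) (i - 1) j := by
  have hsub1 : ∀ (a : Fin (n + 1)), 1 ≤ (a : ℕ) → ((a - 1 : Fin (n + 1)) : ℕ) = (a : ℕ) - 1 := by
    intro a ha
    rw [Fin.coe_sub_one, if_neg]
    intro h0; rw [h0] at ha; simp at ha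
  have hcs : ∀ k : Fin n, (k.succ : Fin (n + 1)) - 1 = k.castSucc := by
    intro k
    apply Fin.ext
    rw [hsub1 k.succ (by simp [Fin.val_succ])]
    simp [Fin.val_succ]
  -- the general two-term identity, also valid out of the triangle
  intro m hm
  induction m with
  | zero => omega
  | succ m ih =>
    -- handle the out-of-triangle case generically first
    have gen : ∀ (M : Matrix (Fin (n + 1)) (Fin (n + 1)) ℝ) (c d : ℝ),
        (∀ p q : Fin (n + 1), (p : ℕ) < (q : ℕ) → M p q = 0) →
        ∀ i j : Fin (n + 1), 1 ≤ (i : ℕ) → 1 ≤ (j : ℕ) → (i : ℕ) < (j : ℕ) →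
          M i j = c * M (i - 1) (j - 1) + d * M (i - 1) j := by
      intro M c d hM i j hi hj hij
      rw [hM i j hij, hM (i - 1) (j - 1) (by rw [hsub1 i hi, hsub1 j hj]; omega),
        hM (i - 1) j (by rw [hsub1 i hi]; omega)]
      ring
    rcases Nat.eq_or_lt_of_le hm with h1 | h2
    · -- base case m + 1 = 1
      have hm0 : m = 0 := by omega
      subst hm0
      intro i j hi hj
      rcases le_or_gt (j : ℕ) (i : ℕ) with hle | hlt
      · simpa using hArec i j hj hle
      · simpa using gen A lam 1 hAz i j hi hj hlt
    · have hm' : 1 ≤ m := by omega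
      have IH := ih hm'
      intro i j hi hj
      rcases le_or_gt (j : ℕ) (i : ℕ) with hle | hlt
      · -- main computation
        have key : ∀ p q : Fin (n + 1), (A ^ (m + 1)) p q = ∑ k, (A ^ m) p k * A k q := by
          intro p q; rw [pow_succ, Matrix.mul_apply]
        have htriB := auxTri A hAz m
        have hi1lt : ((i - 1 : Fin (n + 1)) : ℕ) < n := by
          rw [hsub1 i hi]; have := i.isLt; omega
        rw [key i j, key (i - 1) (j - 1), key (i - 1) j]
        rw [Fin.sum_univ_succ]
        have h0 : (A ^ m) i 0 * A 0 j = 0 := by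
          rw [hAz 0 j (by rw [Fin.val_zero]; omega), mul_zero]
        rw [h0, zero_add]
        -- rewrite each summand with the inductive hypothesis and the base recurrence
        have hsummand : ∀ k : Fin n,
            (A ^ m) i k.succ * A k.succ j
              = lam ^ m * ((A ^ m) (i - 1) k.castSucc *
                  (lam * A k.castSucc (j - 1) + A k.castSucc j))
                + (∑ r ∈ Finset.range m, lam ^ r) * ((A ^ m) (i - 1) k.succ * A k.succ j) := by
          intro k
          have hIHk := IH i k.succ hi (by simp [Fin.val_succ])
          rw [hcs k] at hIHk
          have hA' : A k.succ j = lam * A k.castSucc (j - 1) + A k.castSucc j := by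
            rcases le_or_gt (j : ℕ) ((k.succ : Fin (n + 1)) : ℕ) with h | h
            · have := hArec k.succ j hj h
              rwa [hcs k] at this
            · rw [hAz k.succ j h,
                hAz k.castSucc (j - 1) (by rw [hsub1 j hj]; simp [Fin.val_succ] at h ⊢; omega),
                hAz k.castSucc j (by simp [Fin.val_succ] at h ⊢; omega)]
              ring
          rw [hIHk, hA']
          ring
        rw [Finset.sum_congr rfl (fun k _ => hsummand k)]
        rw [Finset.sum_add_distrib, ← Finset.mul_sum, ← Finset.mul_sum]
        -- second part: sum over succ = full sum minus k = 0 term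
        have hsecond : ∑ k : Fin n, (A ^ m) (i - 1) k.succ * A k.succ j
            = ∑ k : Fin (n + 1), (A ^ m) (i - 1) k * A k j := by
          rw [Fin.sum_univ_succ]
          rw [hAz 0 j (by rw [Fin.val_zero]; omega), mul_zero, zero_add]
        -- first part: split the product and use castSucc sums
        have hfirst : ∑ k : Fin n, (A ^ m) (i - 1) k.castSucc *
              (lam * A k.castSucc (j - 1) + A k.castSucc j)
            = lam * (∑ k : Fin (n + 1), (A ^ m) (i - 1) k * A k (j - 1))
              + ∑ k : Fin (n + 1), (A ^ m) (i - 1) k * A k j := by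
          have e1 : ∑ k : Fin (n + 1), (A ^ m) (i - 1) k * A k (j - 1)
              = ∑ k : Fin n, (A ^ m) (i - 1) k.castSucc * A k.castSucc (j - 1) := by
            rw [Fin.sum_univ_castSucc]
            rw [htriB (i - 1) (Fin.last n) (by simpa using hi1lt), zero_mul, add_zero]
          have e2 : ∑ k : Fin (n + 1), (A ^ m) (i - 1) k * A k j
              = ∑ k : Fin n, (A ^ m) (i - 1) k.castSucc * A k.castSucc j := by
            rw [Fin.sum_univ_castSucc]
            rw [htriB (i - 1) (Fin.last n) (by simpa using hi1lt), zero_mul, add_zero]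
          rw [e1, e2, Finset.mul_sum, ← Finset.sum_add_distrib]
          apply Finset.sum_congr rfl
          intro k _
          ring
        rw [hsecond, hfirst, Finset.sum_range_succ]
        ring
      · exact gen (A ^ (m + 1)) (lam ^ (m + 1)) (∑ r ∈ Finset.range (m + 1), lam ^ r)
          (auxTri A hAz (m + 1)) i j hi hj hlt

/-- If a lower-triangular `(n+1)×(n+1)` real matrix `A` satisfies the two-term recurrence
`A_{i,j} = λ·A_{i-1,j-1} + A_{i-1,j}` for `n ≥ i ≥ j ≥ 1` (the recurrence of the
vertically-recurrent matrix with constant associated sequence `λ`), then for every `m ≥ 1`,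
writing `β_m = Σ_{r=0}^{m-1} λ^r`, the power `A^m` satisfies the generalized vertical
recurrence `(A^m)_{i,j} = Σ_{l=j-1}^{i-1} λ^m · β_m^{i-1-l} · (A^m)_{l,j-1}`; i.e. `A^m`
is vertically recurrent with associated sequence `λ^m · β_m^j`. -/
theorem pow_of_constant_seq_vertRec_matrix
    (lam : ℝ) (n : ℕ) (hn : 1 ≤ n) (A : Matrix (Fin (n + 1)) (Fin (n + 1)) ℝ)
    (hAz : ∀ i j : Fin (n + 1), (i : ℕ) < (j : ℕ) → A i j = 0)
    (hArec : ∀ i j : Fin (n + 1), 1 ≤ (j : ℕ) → (j : ℕ) ≤ (i : ℕ) →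
      A i j = lam * A (i - 1) (j - 1) + A (i - 1) j) :
    ∀ m : ℕ, 1 ≤ m →
      ∀ i j : Fin (n + 1), 1 ≤ (j : ℕ) → (j : ℕ) ≤ (i : ℕ) →
        (A ^ m) i j = ∑ l ∈ Finset.Ico (j - 1) i,
          lam ^ m * (∑ r ∈ Finset.range m, lam ^ r) ^ ((i : ℕ) - 1 - (l : ℕ)) *
            (A ^ m) l (j - 1) := by
  intro m hm
  set β : ℝ := ∑ r ∈ Finset.range m, lam ^ r with hβ
  have htri := auxTri A hAz m
  have htwo := auxTwo lam A hAz hArec m hm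
  have hsub1 : ∀ (a : Fin (n + 1)), 1 ≤ (a : ℕ) → ((a - 1 : Fin (n + 1)) : ℕ) = (a : ℕ) - 1 := by
    intro a ha
    rw [Fin.coe_sub_one, if_neg]
    intro h0; rw [h0] at ha; simp at ha
  -- the statement with ℕ-indexed sums
  have key : ∀ N : ℕ, ∀ i j : Fin (n + 1), (i : ℕ) = N → 1 ≤ (j : ℕ) → (j : ℕ) ≤ (i : ℕ) →
      (A ^ m) i j = ∑ x ∈ Finset.Ico ((j : ℕ) - 1) (i : ℕ),
        lam ^ m * β ^ ((i : ℕ) - 1 - x) * (A ^ m) ((x : Fin (n + 1))) (j - 1) := by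
    intro N
    induction N using Nat.strong_induction_on with
    | _ N ihN =>
      intro i j hiN hj hji
      have hi : 1 ≤ (i : ℕ) := le_trans hj hji
      have hicast : ((((i : ℕ) - 1 : ℕ)) : Fin (n + 1)) = i - 1 := by
        apply Fin.ext
        rw [hsub1 i hi, Fin.val_cast_of_lt (by have := i.isLt; omega)]
      rcases Nat.eq_or_lt_of_le hji with heq | hlt
      · -- i = j case
        have hIco : Finset.Ico ((j : ℕ) - 1) (i : ℕ) = {((j : ℕ) - 1)} := by
          ext a
          simp only [Finset.mem_Ico, Finset.mem_singleton]
          omega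
        rw [hIco, Finset.sum_singleton]
        have hexp : (i : ℕ) - 1 - ((j : ℕ) - 1) = 0 := by omega
        have hjcast : ((((j : ℕ) - 1 : ℕ)) : Fin (n + 1)) = j - 1 := by
          apply Fin.ext
          rw [hsub1 j hj, Fin.val_cast_of_lt (by have := j.isLt; omega)]
        rw [hexp, pow_zero, mul_one, hjcast]
        have hii : i - 1 = j - 1 := by
          apply Fin.ext
          rw [hsub1 i hi, hsub1 j hj, heq]
        rw [htwo i j hi hj, hii,
          htri (j - 1) j (by rw [hsub1 j hj]; omega), mul_zero, add_zero]
      · -- i > j case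
        have hi1 : ((i - 1 : Fin (n + 1)) : ℕ) = (i : ℕ) - 1 := hsub1 i hi
        have ihStep := ihN ((i : ℕ) - 1) (by omega) (i - 1) j (by rw [hi1, hiN])
          hj (by rw [hi1]; omega)
        rw [htwo i j hi hj, ihStep, hi1]
        have htop := Finset.sum_Ico_succ_top (a := (j : ℕ) - 1) (b := (i : ℕ) - 1) (by omega)
          (fun x => lam ^ m * β ^ ((i : ℕ) - 1 - x) * (A ^ m) ((x : Fin (n + 1))) (j - 1))
        rw [show ((i : ℕ) - 1) + 1 = (i : ℕ) from by omega] at htop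
        rw [htop]
        simp only [Nat.sub_self, pow_zero, mul_one, hicast]
        rw [Finset.mul_sum]
        have hcongr : ∀ x ∈ Finset.Ico ((j : ℕ) - 1) ((i : ℕ) - 1),
            β * (lam ^ m * β ^ ((i : ℕ) - 1 - 1 - x) * (A ^ m) ((x : Fin (n + 1))) (j - 1))
              = lam ^ m * β ^ ((i : ℕ) - 1 - x) * (A ^ m) ((x : Fin (n + 1))) (j - 1) := by
          intro x hx
          rw [Finset.mem_Ico] at hx
          rw [show (i : ℕ) - 1 - x = ((i : ℕ) - 1 - 1 - x) + 1 from by omega, pow_succ]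
          ring
        rw [Finset.sum_congr rfl hcongr]
        ring
  intro i j hj hij
  have hmain := key (i : ℕ) i j rfl hj hij
  have h1 : ((j - 1 : Fin (n + 1)) : ℕ) = (j : ℕ) - 1 := hsub1 j hj
  rw [hmain, ← h1, ← Fin.map_valEmbedding_Ico, Finset.sum_map]
  apply Finset.sum_congr rfl
  intro l _
  simp only [Fin.valEmbedding_apply]
  rw [Fin.cast_val_eq_self]
end

section
/- Let λ be a real number, n ≥ 1, and let A be an (n+1)×(n+1) real matrix satisfying A_{i,j} = 0 for j > i and A_{i,j} = A_{i-1,j-1} + λ·A_{i-1,j} for all n ≥ i ≥ j ≥ 1 (the two-term recurrence arising from the vertically-recurrent matrix with associated sequence λ^j). Then for every m ≥ 1 the matrix power A^m satisfies the generalized vertical recurrence (A^m)_{i,j} = Σ_{l=j-1}^{i-1} (m·λ)^{i-1-l} · (A^m)_{l,j-1} for all n ≥ i ≥ j ≥ 1; that is, A^m is vertically recurrent with associated sequence (m·λ)^j. -/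
open Finset Matrix


lemma aux_pow_triu {n : ℕ} (A : Matrix (Fin (n + 1)) (Fin (n + 1)) ℝ)
    (hAz : ∀ i j : Fin (n + 1), (i : ℕ) < (j : ℕ) → A i j = 0) (m : ℕ) :
    ∀ i j : Fin (n + 1), (i : ℕ) < (j : ℕ) → (A ^ m) i j = 0 := by
  induction m with
  | zero =>
    intro i j h
    have : i ≠ j := by intro he; rw [he] at h; omega
    simp [Matrix.one_apply_ne this]
  | succ m ih =>
    intro i j h
    rw [pow_succ, Matrix.mul_apply]
    apply Finset.sum_eq_zero
    intro k _
    rcases lt_or_ge (i : ℕ) (k : ℕ) with hk | hk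
    · rw [ih i k hk, zero_mul]
    · rw [hAz k j (by omega), mul_zero]


open Fin.NatCast in
lemma aux_mul_rec {n : ℕ} (A B : Matrix (Fin (n + 1)) (Fin (n + 1)) ℝ) (lam c : ℝ)
    (hAz : ∀ i j : Fin (n + 1), (i : ℕ) < (j : ℕ) → A i j = 0)
    (hArec : ∀ i j : Fin (n + 1), 1 ≤ (j : ℕ) → (j : ℕ) ≤ (i : ℕ) →
      A i j = A (i - 1) (j - 1) + lam * A (i - 1) j)
    (hBz : ∀ i j : Fin (n + 1), (i : ℕ) < (j : ℕ) → B i j = 0)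
    (hBrec : ∀ i j : Fin (n + 1), 1 ≤ (j : ℕ) → (j : ℕ) ≤ (i : ℕ) →
      B i j = B (i - 1) (j - 1) + c * B (i - 1) j)
    (i j : Fin (n + 1)) (hj : 1 ≤ (j : ℕ)) (hji : (j : ℕ) ≤ (i : ℕ)) :
    (A * B) i j = (A * B) (i - 1) (j - 1) + (lam + c) * (A * B) (i - 1) j := by
  have hin : (i : ℕ) ≤ n := Nat.lt_succ_iff.mp i.isLt
  have hi0 : i ≠ 0 := by intro h; rw [h] at hji; simp at hji; have : ((0 : Fin (n + 1)) : ℕ) = 0 := rfl; omega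
  have hj0 : j ≠ 0 := by intro h; rw [h] at hj; simp at hj
  have hi1 : ((i - 1 : Fin (n + 1)) : ℕ) = (i : ℕ) - 1 := by
    rw [Fin.coe_sub_one, if_neg hi0]
  have hj1 : ((j - 1 : Fin (n + 1)) : ℕ) = (j : ℕ) - 1 := by
    rw [Fin.coe_sub_one, if_neg hj0]
  have conv : ∀ p q : Fin (n + 1),
      (A * B) p q = ∑ k ∈ Finset.range (n + 1), A p (↑k) * B (↑k) q := by
    intro p q
    rw [Matrix.mul_apply, ← Fin.sum_univ_eq_sum_range (fun k => A p (↑k) * B (↑k) q) (n + 1)]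
    apply Finset.sum_congr rfl
    intro k _
    rw [Fin.cast_val_eq_self]
  -- helper: extend range i sums
  have hext : ∀ q : Fin (n + 1),
      ∑ k ∈ Finset.range (i : ℕ), A (i - 1) (↑k) * B (↑k) q = (A * B) (i - 1) q := by
    intro q
    rw [conv]
    apply Finset.sum_subset
    · intro k hk
      simp only [Finset.mem_range] at hk ⊢
      omega
    · intro k hk hk'
      simp only [Finset.mem_range] at hk hk'
      have hv : ((k : Fin (n + 1)) : ℕ) = k := Fin.val_cast_of_lt hk
      rw [hAz (i - 1) ↑k (by rw [hi1, hv]; omega), zero_mul]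
  rw [conv i j]
  -- restrict to Icc 1 i
  have hstep : ∑ k ∈ Finset.range (n + 1), A i (↑k) * B (↑k) j
      = ∑ k ∈ Finset.Icc 1 (i : ℕ), A i (↑k) * B (↑k) j := by
    symm
    apply Finset.sum_subset
    · intro k hk
      simp only [Finset.mem_Icc] at hk
      simp only [Finset.mem_range]
      omega
    · intro k hk hk'
      simp only [Finset.mem_range] at hk
      simp only [Finset.mem_Icc, not_and_or, not_le] at hk'
      have hv : ((k : Fin (n + 1)) : ℕ) = k := Fin.val_cast_of_lt hk
      rcases hk' with h0 | hbig
      · have : k = 0 := by omega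
        subst this
        rw [hBz ↑(0:ℕ) j (by rw [hv]; omega), mul_zero]
      · rw [hAz i ↑k (by rw [hv]; omega), zero_mul]
  rw [hstep]
  have hterm : ∀ k ∈ Finset.Icc 1 (i : ℕ), A i (↑k) * B (↑k) j
      = A (i - 1) (↑(k - 1)) * B (↑k) j + lam * (A (i - 1) (↑k) * B (↑k) j) := by
    intro k hk
    simp only [Finset.mem_Icc] at hk
    have hkn : k < n + 1 := by omega
    have hv : ((k : Fin (n + 1)) : ℕ) = k := Fin.val_cast_of_lt hkn
    rw [hArec i ↑k (by rw [hv]; omega) (by rw [hv]; omega)]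
    have hsub : (↑k - 1 : Fin (n + 1)) = ↑(k - 1) := by
      apply Fin.ext
      rw [Fin.coe_sub_one, if_neg (by intro h0; rw [h0] at hv; simp at hv; omega),
        hv, Fin.val_cast_of_lt (by omega)]
    rw [hsub]
    ring
  rw [Finset.sum_congr rfl hterm, Finset.sum_add_distrib, ← Finset.mul_sum]
  -- second sum = (A*B)(i-1) j
  have hsum2 : ∑ k ∈ Finset.Icc 1 (i : ℕ), A (i - 1) (↑k) * B (↑k) j
      = (A * B) (i - 1) j := by
    rw [conv]
    apply Finset.sum_subset
    · intro k hk
      simp only [Finset.mem_Icc] at hk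
      simp only [Finset.mem_range]
      omega
    · intro k hk hk'
      simp only [Finset.mem_range] at hk
      simp only [Finset.mem_Icc, not_and_or, not_le] at hk'
      have hv : ((k : Fin (n + 1)) : ℕ) = k := Fin.val_cast_of_lt hk
      rcases hk' with h0 | hbig
      · have : k = 0 := by omega
        subst this
        rw [hBz ↑(0:ℕ) j (by rw [hv]; omega), mul_zero]
      · rw [hAz (i - 1) ↑k (by rw [hi1, hv]; omega), zero_mul]
  rw [hsum2]
  -- first sum: reindex
  have hsum1 : ∑ k ∈ Finset.Icc 1 (i : ℕ), A (i - 1) (↑(k - 1)) * B (↑k) j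
      = ∑ k ∈ Finset.range (i : ℕ), A (i - 1) (↑k) * B (↑(k + 1)) j := by
    rw [← Finset.Ico_add_one_right_eq_Icc, Finset.sum_Ico_eq_sum_range]
    simp only [Nat.add_sub_cancel, Nat.succ_sub_one]
    apply Finset.sum_congr rfl
    intro k _
    have h1 : 1 + k - 1 = k := by omega
    have h2 : 1 + k = k + 1 := by omega
    rw [h1, h2]
  rw [hsum1]
  -- termwise B recurrence
  have hterm2 : ∀ k ∈ Finset.range (i : ℕ), A (i - 1) (↑k) * B (↑(k + 1)) j
      = A (i - 1) (↑k) * B (↑k) (j - 1) + c * (A (i - 1) (↑k) * B (↑k) j) := by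
    intro k hk
    simp only [Finset.mem_range] at hk
    have hkn : k + 1 < n + 1 := by omega
    have hv1 : ((↑(k + 1) : Fin (n + 1)) : ℕ) = k + 1 := Fin.val_cast_of_lt hkn
    have hv : ((k : Fin (n + 1)) : ℕ) = k := Fin.val_cast_of_lt (by omega)
    have hsub : (↑(k + 1) - 1 : Fin (n + 1)) = ↑k := by
      apply Fin.ext
      rw [Fin.coe_sub_one, if_neg (by intro h0; rw [h0] at hv1; simp at hv1), hv1, hv]
      omega
    rcases le_or_gt (j : ℕ) (k + 1) with hle | hgt
    · rw [hBrec ↑(k + 1) j hj (by rw [hv1]; omega), hsub]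
      ring
    · rw [hBz ↑(k + 1) j (by rw [hv1]; omega),
        hBz ↑k (j - 1) (by rw [hv, Fin.coe_sub_one, if_neg hj0]; omega),
        hBz ↑k j (by rw [hv]; omega)]
      ring
  rw [Finset.sum_congr rfl hterm2, Finset.sum_add_distrib, ← Finset.mul_sum,
    hext (j - 1), hext j]
  ring

lemma aux_pow_rec {n : ℕ} (A : Matrix (Fin (n + 1)) (Fin (n + 1)) ℝ) (lam : ℝ)
    (hAz : ∀ i j : Fin (n + 1), (i : ℕ) < (j : ℕ) → A i j = 0)
    (hArec : ∀ i j : Fin (n + 1), 1 ≤ (j : ℕ) → (j : ℕ) ≤ (i : ℕ) →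
      A i j = A (i - 1) (j - 1) + lam * A (i - 1) j)
    (m : ℕ) (hm : 1 ≤ m) :
    ∀ i j : Fin (n + 1), 1 ≤ (j : ℕ) → (j : ℕ) ≤ (i : ℕ) →
      (A ^ m) i j = (A ^ m) (i - 1) (j - 1) + ((m : ℝ) * lam) * (A ^ m) (i - 1) j := by
  induction m with
  | zero => omega
  | succ m ih =>
    rcases Nat.eq_zero_or_pos m with hm0 | hm1
    · subst hm0
      intro i j hj hji
      simpa [pow_one] using hArec i j hj hji
    · intro i j hj hji
      rw [pow_succ']
      have := aux_mul_rec A (A ^ m) lam ((m : ℝ) * lam) hAz hArec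
        (aux_pow_triu A hAz m) (ih hm1) i j hj hji
      rw [this]
      push_cast
      ring

open Fin.NatCast in
lemma aux_rec_sum {n : ℕ} (M : Matrix (Fin (n + 1)) (Fin (n + 1)) ℝ) (c : ℝ)
    (hMz : ∀ i j : Fin (n + 1), (i : ℕ) < (j : ℕ) → M i j = 0)
    (hMrec : ∀ i j : Fin (n + 1), 1 ≤ (j : ℕ) → (j : ℕ) ≤ (i : ℕ) →
      M i j = M (i - 1) (j - 1) + c * M (i - 1) j) :
    ∀ i j : Fin (n + 1), 1 ≤ (j : ℕ) → (j : ℕ) ≤ (i : ℕ) →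
      M i j = ∑ l ∈ Finset.Ico (j - 1) i,
        c ^ ((i : ℕ) - 1 - (l : ℕ)) * M l (j - 1) := by
  have key : ∀ N : ℕ, ∀ i j : Fin (n + 1), (i : ℕ) ≤ N → 1 ≤ (j : ℕ) → (j : ℕ) ≤ (i : ℕ) →
      M i j = ∑ l ∈ Finset.Ico ((j : ℕ) - 1) (i : ℕ),
        c ^ ((i : ℕ) - 1 - l) * M (↑l) (j - 1) := by
    intro N
    induction N with
    | zero => intro i j hiN hj hji; omega
    | succ N ih =>
      intro i j hiN hj hji
      have hi0 : i ≠ 0 := by intro h; rw [h] at hji; simp at hji; have : ((0 : Fin (n + 1)) : ℕ) = 0 := rfl; omega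
      have hj0 : j ≠ 0 := by intro h; rw [h] at hj; simp at hj
      have hi1 : ((i - 1 : Fin (n + 1)) : ℕ) = (i : ℕ) - 1 := by
        rw [Fin.coe_sub_one, if_neg hi0]
      have hj1 : ((j - 1 : Fin (n + 1)) : ℕ) = (j : ℕ) - 1 := by
        rw [Fin.coe_sub_one, if_neg hj0]
      rw [hMrec i j hj hji]
      rcases eq_or_lt_of_le hji with heq | hlt
      · -- i = j case
        rw [hMz (i - 1) j (by rw [hi1]; omega), mul_zero, add_zero]
        have hset : Finset.Ico ((j : ℕ) - 1) (i : ℕ) = {(j : ℕ) - 1} := by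
          rw [show (i : ℕ) = ((j : ℕ) - 1) + 1 by omega, Nat.Ico_succ_singleton]
        rw [hset, Finset.sum_singleton]
        have hc : (i : ℕ) - 1 - ((j : ℕ) - 1) = 0 := by omega
        have hcast : (↑((j : ℕ) - 1) : Fin (n + 1)) = i - 1 := by
          apply Fin.ext
          rw [hi1, Fin.val_cast_of_lt (by omega)]
          omega
        rw [hc, pow_zero, one_mul, hcast]
      · -- j < i case
        have hi1N : ((i - 1 : Fin (n + 1)) : ℕ) ≤ N := by omega
        have hji' : (j : ℕ) ≤ ((i - 1 : Fin (n + 1)) : ℕ) := by rw [hi1]; omega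
        rw [ih (i - 1) j hi1N hj hji', Finset.mul_sum, hi1]
        rw [show (i : ℕ) = ((i : ℕ) - 1) + 1 by omega, Finset.sum_Ico_succ_top (by omega)]
        have htop : c ^ ((i : ℕ) - 1 + 1 - 1 - ((i : ℕ) - 1)) * M (↑((i : ℕ) - 1)) (j - 1)
            = M (i - 1) (j - 1) := by
          have h0 : (i : ℕ) - 1 + 1 - 1 - ((i : ℕ) - 1) = 0 := by omega
          have hcast : (↑((i : ℕ) - 1) : Fin (n + 1)) = i - 1 := by
            apply Fin.ext
            rw [hi1, Fin.val_cast_of_lt (by omega)]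
          rw [h0, pow_zero, one_mul, hcast]
        rw [htop]
        rw [add_comm]
        congr 1
        apply Finset.sum_congr rfl
        intro l hl
        simp only [Finset.mem_Ico] at hl
        rw [← mul_assoc, ← pow_succ']
        congr 2
        omega
  intro i j hj hji
  have hj0 : j ≠ 0 := by intro h; rw [h] at hj; simp at hj
  have hj1 : ((j - 1 : Fin (n + 1)) : ℕ) = (j : ℕ) - 1 := by
    rw [Fin.coe_sub_one, if_neg hj0]
  rw [key (i : ℕ) i j le_rfl hj hji, ← hj1, ← Fin.map_valEmbedding_Ico, Finset.sum_map]
  apply Finset.sum_congr rfl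
  intro l _
  simp [Fin.cast_val_eq_self]

/-- If a lower-triangular `(n+1)×(n+1)` real matrix `A` satisfies the two-term recurrence
`A_{i,j} = A_{i-1,j-1} + λ·A_{i-1,j}` for `n ≥ i ≥ j ≥ 1` (the recurrence of the
vertically-recurrent matrix with associated sequence `λ^j`), then for every `m ≥ 1`
the power `A^m` satisfies the generalized vertical recurrence
`(A^m)_{i,j} = Σ_{l=j-1}^{i-1} (m·λ)^{i-1-l} · (A^m)_{l,j-1}`; i.e. `A^m` is vertically
recurrent with associated sequence `(m·λ)^j`. -/
theorem pow_of_geometric_seq_vertRec_matrix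
    (lam : ℝ) (n : ℕ) (hn : 1 ≤ n) (A : Matrix (Fin (n + 1)) (Fin (n + 1)) ℝ)
    (hAz : ∀ i j : Fin (n + 1), (i : ℕ) < (j : ℕ) → A i j = 0)
    (hArec : ∀ i j : Fin (n + 1), 1 ≤ (j : ℕ) → (j : ℕ) ≤ (i : ℕ) →
      A i j = A (i - 1) (j - 1) + lam * A (i - 1) j) :
    ∀ m : ℕ, 1 ≤ m →
      ∀ i j : Fin (n + 1), 1 ≤ (j : ℕ) → (j : ℕ) ≤ (i : ℕ) →
        (A ^ m) i j = ∑ l ∈ Finset.Ico (j - 1) i,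
          ((m : ℝ) * lam) ^ ((i : ℕ) - 1 - (l : ℕ)) * (A ^ m) l (j - 1) := by
  intro m hm i j hj hji
  exact aux_rec_sum (A ^ m) ((m : ℝ) * lam) (aux_pow_triu A hAz m)
    (aux_pow_rec A lam hAz hArec m hm) i j hj hji
end

section
/- Let a : ℕ × ℕ → ℝ be an admissible matrix, i.e., a(n,k) = 0 for n < k, a(n,n) = 1 for all n, and Σ_{k=0}^{min(m,n)} a(m,k)·a(n,k) = a(m+n, 0) for all m, n ≥ 0. Define b(n) = a(n+1, n), s(0) = b(0), and s(k) = b(k) − b(k-1) for k ≥ 1. Then a(0,0) = 1, a(0,k) = 0 for k > 0, and for all n ≥ 1 and k ≥ 0: a(n,k) = a(n-1,k-1) + s(k)·a(n-1,k) + a(n-1,k+1), where a(n-1,-1) is taken to be 0. -/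
open Finset

/-- Every admissible matrix satisfies the three-term recurrence
`a(n,k) = a(n-1,k-1) + s(k)·a(n-1,k) + a(n-1,k+1)` where `s(0) = b(0)`,
`s(k) = b(k) - b(k-1)` for `k ≥ 1`, and `b(n) = a(n+1,n)`. -/
theorem admissible_matrix_three_term_recurrence
    (a : ℕ × ℕ → ℝ)
    (haz : ∀ n k : ℕ, n < k → a (n, k) = 0)
    (hdiag : ∀ n : ℕ, a (n, n) = 1)
    (hinner : ∀ m n : ℕ,
      ∑ k ∈ Finset.range (min m n + 1), a (m, k) * a (n, k) = a (m + n, 0))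
    (b : ℕ → ℝ) (hb : ∀ n : ℕ, b n = a (n + 1, n))
    (s : ℕ → ℝ) (hs0 : s 0 = b 0) (hs : ∀ k : ℕ, 1 ≤ k → s k = b k - b (k - 1)) :
    a (0, 0) = 1 ∧ (∀ k : ℕ, 0 < k → a (0, k) = 0) ∧
    (∀ n k : ℕ, 1 ≤ n →
      a (n, k) = (if k = 0 then 0 else a (n - 1, k - 1)) +
        s k * a (n - 1, k) + a (n - 1, k + 1)) := by
  have hinner' : ∀ m n N : ℕ, min m n < N →
      ∑ k ∈ Finset.range N, a (m, k) * a (n, k) = a (m + n, 0) := by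
    intro m n N hN
    rw [← hinner m n]
    refine (Finset.sum_subset (Finset.range_subset_range.mpr hN) ?_).symm
    intro x hx hx'
    simp only [Finset.mem_range, not_lt] at hx'
    have : min m n < x := by omega
    rcases min_lt_iff.mp this with h | h
    · rw [haz m x h, zero_mul]
    · rw [haz n x h, mul_zero]
  have key : ∀ n k : ℕ, 1 ≤ n →
      a (n, k) = (if k = 0 then 0 else a (n - 1, k - 1)) +
        s k * a (n - 1, k) + a (n - 1, k + 1) := by
    intro n
    induction n using Nat.strong_induction_on with
    | _ n IH =>
      intro k hn
      obtain ⟨p, rfl⟩ : ∃ p, n = p + 1 := ⟨n - 1, (Nat.succ_pred_eq_of_pos hn).symm⟩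
      simp only [Nat.add_sub_cancel]
      set d : ℕ → ℝ := fun j =>
        a (p + 1, j) - ((if j = 0 then 0 else a (p, j - 1)) + s j * a (p, j)
          + a (p, j + 1)) with hdd
      -- the defect vanishes near and above the diagonal
      have hd_top : ∀ j, p ≤ j → d j = 0 := by
        intro j hj
        rcases eq_or_lt_of_le hj with rfl | hj1
        · -- j = p
          simp only [hdd]
          rcases Nat.eq_zero_or_pos p with rfl | hp
          · rw [if_pos rfl, hdiag 0, haz 0 1 (by omega), hs0, hb 0]
            ring
          · obtain ⟨q, rfl⟩ : ∃ q, p = q + 1 := ⟨p - 1, (Nat.succ_pred_eq_of_pos hp).symm⟩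
            rw [if_neg (Nat.succ_ne_zero q), hdiag (q + 1), haz (q + 1) (q + 2) (by omega),
              hs (q + 1) (by omega)]
            simp only [Nat.add_sub_cancel]
            rw [← hb (q + 1), ← hb q]  -- a(q+2,q+1) = b(q+1), a(q+1,q) = b q
            ring
        · by_cases hj2 : j = p + 1
          · -- j = p + 1
            subst hj2
            simp only [hdd]
            rw [if_neg (Nat.succ_ne_zero p), hdiag (p + 1)]
            simp only [Nat.add_sub_cancel]
            rw [hdiag p, haz p (p + 1) (by omega), haz p (p + 2) (by omega)]
            ring
          · -- j ≥ p + 2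
            simp only [hdd]
            rw [if_neg (by omega : ¬ j = 0), haz (p + 1) j (by omega),
              haz p (j - 1) (by omega), haz p j (by omega), haz p (j + 1) (by omega)]
            ring
      -- the defect is orthogonal to all rows m with m + 1 ≤ p
      have horth : ∀ m, m + 1 ≤ p →
          ∑ j ∈ Finset.range (p + m + 3), d j * a (m, j) = 0 := by
        intro m hm
        have hIH : ∀ j : ℕ, a (m + 1, j) =
            (if j = 0 then 0 else a (m, j - 1)) + s j * a (m, j) + a (m, j + 1) := by
          intro j
          have := IH (m + 1) (by omega) j (by omega)
          simpa using this
        set M : ℕ := p + m + 2 with hM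
        have e1 : ∑ j ∈ Finset.range (M + 1), a (p + 1, j) * a (m, j) = a (p + 1 + m, 0) :=
          hinner' (p + 1) m (M + 1) (lt_of_le_of_lt (min_le_left _ _) (by omega))
        have e2 : ∑ j ∈ Finset.range (M + 1), a (p, j) * a (m + 1, j) = a (p + (m + 1), 0) :=
          hinner' p (m + 1) (M + 1) (lt_of_le_of_lt (min_le_left _ _) (by omega))
        have e12 : a (p + 1 + m, 0) = a (p + (m + 1), 0) := by
          rw [show p + 1 + m = p + (m + 1) by omega]
        -- telescoping identity
        set G : ℕ → ℝ := fun j => a (p, j) * a (m, j + 1) - a (p, j + 1) * a (m, j) with hG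
        have e3 : ∑ j ∈ Finset.range (M + 1),
            (((if j = 0 then 0 else a (p, j - 1)) + s j * a (p, j) + a (p, j + 1)) * a (m, j)
              - a (p, j) * a (m + 1, j)) = 0 := by
          rw [Finset.sum_range_succ']
          have hterm : ∀ j : ℕ,
              (((if j + 1 = 0 then 0 else a (p, j + 1 - 1)) + s (j + 1) * a (p, j + 1)
                  + a (p, j + 1 + 1)) * a (m, j + 1)
                - a (p, j + 1) * a (m + 1, j + 1)) = G j - G (j + 1) := by
            intro j
            rw [hIH (j + 1), if_neg (Nat.succ_ne_zero j), if_neg (Nat.succ_ne_zero j)]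
            simp only [hG, Nat.add_sub_cancel]
            ring
          rw [Finset.sum_congr rfl (fun j _ => hterm j), Finset.sum_range_sub']
          have h0 : (((if (0 : ℕ) = 0 then (0 : ℝ) else a (p, 0 - 1)) + s 0 * a (p, 0)
              + a (p, 0 + 1)) * a (m, 0) - a (p, 0) * a (m + 1, 0)) = -G 0 := by
            rw [hIH 0, if_pos rfl, if_pos rfl]
            simp only [hG]
            ring
          rw [h0]
          have hGM : G M = 0 := by
            simp only [hG]
            rw [haz m (M + 1) (by omega), haz m M (by omega)]
            ring
          rw [hGM]
          ring
        have expand : ∑ j ∈ Finset.range (M + 1), d j * a (m, j)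
            = (∑ j ∈ Finset.range (M + 1), a (p + 1, j) * a (m, j))
              - (∑ j ∈ Finset.range (M + 1), a (p, j) * a (m + 1, j))
              - ∑ j ∈ Finset.range (M + 1),
                  (((if j = 0 then 0 else a (p, j - 1)) + s j * a (p, j) + a (p, j + 1))
                      * a (m, j) - a (p, j) * a (m + 1, j)) := by
          rw [← Finset.sum_sub_distrib, ← Finset.sum_sub_distrib]
          refine Finset.sum_congr rfl fun j _ => ?_
          simp only [hdd]
          ring
        show ∑ j ∈ Finset.range (M + 1), d j * a (m, j) = 0
        rw [expand, e1, e2, e3, e12]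
        ring
      -- conclude the defect is identically zero
      have hzero : ∀ j : ℕ, d j = 0 := by
        intro j
        induction j using Nat.strong_induction_on with
        | _ j IHj =>
          by_cases hj : p ≤ j
          · exact hd_top j hj
          · have h0 := horth j (by omega)
            rw [Finset.sum_eq_single j] at h0
            · rwa [hdiag j, mul_one] at h0
            · intro i _ hij
              rcases lt_or_gt_of_ne hij with h | h
              · rw [IHj i h, zero_mul]
              · rw [haz j i h, mul_zero]
            · intro hjmem
              exact absurd (Finset.mem_range.mpr (by omega)) hjmem
      have := hzero k
      simp only [hdd] at this
      linarith
  exact ⟨hdiag 0, fun k hk => haz 0 k hk, key⟩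
end

section
/- Let s : ℕ → ℝ and define a : ℕ × ℕ → ℝ by a(0,0) = 1, a(0,k) = 0 for k > 0, and for n ≥ 1: a(n,k) = a(n-1,k-1) + s(k)·a(n-1,k) + a(n-1,k+1), where a(n-1,-1) is taken to be 0. Then a is an admissible matrix, i.e., a(n,k) = 0 for n < k, a(n,n) = 1 for all n, and Σ_{k=0}^{min(m,n)} a(m,k)·a(n,k) = a(m+n, 0) for all m, n ≥ 0; moreover a(n+1, n) = s(0) + s(1) + ⋯ + s(n) for all n ≥ 0. -/
open Finset

/-- The array determined by the three-term recurrence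
`a(n,k) = a(n-1,k-1) + s(k)·a(n-1,k) + a(n-1,k+1)` (with `a(n-1,-1)` taken to be `0`),
`a(0,0) = 1`, `a(0,k) = 0` for `k > 0`. -/
def admArray (s : ℕ → ℝ) : ℕ → ℕ → ℝ
  | 0, 0 => 1
  | 0, _ + 1 => 0
  | n + 1, k =>
      (if k = 0 then 0 else admArray s n (k - 1)) + s k * admArray s n k +
        admArray s n (k + 1)

lemma admArray_succ (s : ℕ → ℝ) (n k : ℕ) :
    admArray s (n + 1) k =
      (if k = 0 then 0 else admArray s n (k - 1)) + s k * admArray s n k +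
        admArray s n (k + 1) := rfl

lemma admArray_vanish (s : ℕ → ℝ) : ∀ n k, n < k → admArray s n k = 0 := by
  intro n
  induction n with
  | zero =>
    intro k hk
    match k, hk with
    | k + 1, _ => rfl
  | succ n ih =>
    intro k hk
    rw [admArray_succ, if_neg (by omega : k ≠ 0), ih (k - 1) (by omega), ih k (by omega),
      ih (k + 1) (by omega)]
    ring

lemma admArray_diag (s : ℕ → ℝ) : ∀ n, admArray s n n = 1 := by
  intro n
  induction n with
  | zero => rfl
  | succ n ih =>
    rw [admArray_succ, if_neg (Nat.succ_ne_zero n), Nat.add_sub_cancel, ih,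
      admArray_vanish s n (n + 1) (by omega), admArray_vanish s n (n + 2) (by omega)]
    ring

lemma admArray_sub (s : ℕ → ℝ) :
    ∀ n, admArray s (n + 1) n = ∑ i ∈ Finset.range (n + 1), s i := by
  intro n
  induction n with
  | zero =>
    show (0 : ℝ) + s 0 * admArray s 0 0 + admArray s 0 1 = _
    show (0 : ℝ) + s 0 * 1 + 0 = _
    simp
  | succ n ih =>
    rw [admArray_succ, if_neg (Nat.succ_ne_zero n), Nat.add_sub_cancel, ih,
      admArray_diag, admArray_vanish s (n + 1) (n + 2) (by omega),
      Finset.sum_range_succ s (n + 1)]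
    ring

lemma shift_sum (N : ℕ) (a b : ℕ → ℝ) :
    ∑ k ∈ Finset.range (N + 1), (if k = 0 then 0 else a (k - 1) * b k) =
      ∑ k ∈ Finset.range N, a k * b (k + 1) := by
  rw [Finset.sum_range_succ']
  simp

lemma shift_sum' (N : ℕ) (a b : ℕ → ℝ) :
    ∑ k ∈ Finset.range (N + 1), (if k = 0 then 0 else a k * b (k - 1)) =
      ∑ k ∈ Finset.range N, a (k + 1) * b k := by
  rw [Finset.sum_range_succ']
  simp

lemma admArray_key (s : ℕ → ℝ) (m n : ℕ) :
    ∑ k ∈ Finset.range (m + n + 2), admArray s (m + 1) k * admArray s n k =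
      ∑ k ∈ Finset.range (m + n + 2), admArray s m k * admArray s (n + 1) k := by
  have expandL : ∀ k, admArray s (m + 1) k * admArray s n k =
      (if k = 0 then 0 else admArray s m (k - 1) * admArray s n k)
        + s k * admArray s m k * admArray s n k
        + admArray s m (k + 1) * admArray s n k := by
    intro k
    rw [admArray_succ]
    split_ifs <;> ring
  have expandR : ∀ k, admArray s m k * admArray s (n + 1) k =
      (if k = 0 then 0 else admArray s m k * admArray s n (k - 1))
        + s k * admArray s m k * admArray s n k
        + admArray s m k * admArray s n (k + 1) := by
    intro k
    rw [admArray_succ]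
    split_ifs <;> ring
  simp only [expandL, expandR, Finset.sum_add_distrib]
  rw [show m + n + 2 = (m + n + 1) + 1 from rfl,
    shift_sum (m + n + 1) (fun k => admArray s m k) (fun k => admArray s n k),
    shift_sum' (m + n + 1) (fun k => admArray s m k) (fun k => admArray s n k)]
  rw [Finset.sum_range_succ (fun k => admArray s m (k + 1) * admArray s n k) (m + n + 1),
    Finset.sum_range_succ (fun k => admArray s m k * admArray s n (k + 1)) (m + n + 1)]
  rw [admArray_vanish s m (m + n + 1 + 1) (by omega),
    admArray_vanish s n (m + n + 1 + 1) (by omega)]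
  ring

lemma admArray_inprod (s : ℕ → ℝ) :
    ∀ m n, ∑ k ∈ Finset.range (m + n + 1), admArray s m k * admArray s n k =
      admArray s (m + n) 0 := by
  intro m
  induction m with
  | zero =>
    intro n
    rw [show 0 + n + 1 = n + 1 from by omega, Finset.sum_range_succ']
    have h1 : ∀ i : ℕ, admArray s 0 (i + 1) = 0 := fun i => rfl
    simp only [h1, zero_mul, Finset.sum_const_zero, zero_add]
    have h0 : admArray s 0 0 = 1 := rfl
    rw [h0, one_mul]
  | succ m ih =>
    intro n
    rw [show m + 1 + n + 1 = m + n + 2 from by omega, admArray_key s m n]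
    have := ih (n + 1)
    rw [show m + (n + 1) + 1 = m + n + 2 from by omega] at this
    rw [this]
    congr 1
    omega

/-- The array defined by the three-term recurrence from the sequence `s` is an admissible
matrix, with `a(n+1,n) = s(0) + s(1) + ⋯ + s(n)`. -/
theorem admArray_is_admissible (s : ℕ → ℝ) :
    (∀ n k : ℕ, n < k → admArray s n k = 0) ∧
    (∀ n : ℕ, admArray s n n = 1) ∧
    (∀ m n : ℕ,
      ∑ k ∈ Finset.range (min m n + 1), admArray s m k * admArray s n k =
        admArray s (m + n) 0) ∧
    (∀ n : ℕ, admArray s (n + 1) n = ∑ i ∈ Finset.range (n + 1), s i) := by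
  refine ⟨admArray_vanish s, admArray_diag s, ?_, admArray_sub s⟩
  intro m n
  rw [← admArray_inprod s m n]
  apply Finset.sum_subset
  · intro k hk
    simp only [Finset.mem_range] at *
    omega
  · intro k _ hk
    simp only [Finset.mem_range, not_lt] at hk
    rcases le_or_gt k m with h | h
    · rw [admArray_vanish s n k (by omega), mul_zero]
    · rw [admArray_vanish s m k h, zero_mul]
end

section
/- For every natural number n and every real number x, S_n[x] = P_{n,1}[x] · P_n[−x], where S_n[x], P_{n,1}[x], and P_n[x] are the (n+1)×(n+1) real matrices with entries (S_n[x])_{i,j} = x^{i−j} for i ≥ j and 0 otherwise, (P_{n,1}[x])_{i,j} = C(i+1, j+1)·x^{i−j} for i ≥ j and 0 otherwise, and (P_n[x])_{i,j} = C(i, j)·x^{i−j} for i ≥ j and 0 otherwise. -/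
open Finset Matrix

/-- The lower-triangular Toeplitz matrix `S_n[x]` with entries `x^{i-j}` for `i ≥ j`. -/
def Smat (n : ℕ) (x : ℝ) : Matrix (Fin (n + 1)) (Fin (n + 1)) ℝ :=
  Matrix.of fun i j => if (j : ℕ) ≤ (i : ℕ) then x ^ ((i : ℕ) - (j : ℕ)) else 0

/-- The Pascal 1-eliminated functional matrix `P_{n,1}[x]` with entries
`C(i+1, j+1)·x^{i-j}` for `i ≥ j`. -/
def PascalOneElim (n : ℕ) (x : ℝ) : Matrix (Fin (n + 1)) (Fin (n + 1)) ℝ :=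
  Matrix.of fun i j =>
    if (j : ℕ) ≤ (i : ℕ) then (Nat.choose ((i : ℕ) + 1) ((j : ℕ) + 1) : ℝ) * x ^ ((i : ℕ) - (j : ℕ))
    else 0

/-- The Pascal functional matrix `P_n[x]` with entries `C(i, j)·x^{i-j}` for `i ≥ j`. -/
def PascalFunctional (n : ℕ) (x : ℝ) : Matrix (Fin (n + 1)) (Fin (n + 1)) ℝ :=
  Matrix.of fun i j =>
    if (j : ℕ) ≤ (i : ℕ) then (Nat.choose (i : ℕ) (j : ℕ) : ℝ) * x ^ ((i : ℕ) - (j : ℕ))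
    else 0

lemma real_alt_sum (d : ℕ) :
    (∑ m ∈ Finset.range (d + 1), (-1 : ℝ) ^ m * d.choose m) = if d = 0 then 1 else 0 := by
  by_cases hd : d = 0
  · simp [hd]
  · rw [if_neg hd]
    exact_mod_cast Int.alternating_sum_range_choose_of_ne hd

lemma pascal_mul_pascal_neg (n : ℕ) (x : ℝ) :
    PascalFunctional n x * PascalFunctional n (-x) = 1 := by
  ext i j
  rw [Matrix.mul_apply, Matrix.one_apply]
  simp only [PascalFunctional, Matrix.of_apply]
  set g : ℕ → ℝ := fun k =>
    (if k ≤ (i : ℕ) then ((i : ℕ).choose k : ℝ) * x ^ ((i : ℕ) - k) else 0) *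
    (if (j : ℕ) ≤ k then (k.choose (j : ℕ) : ℝ) * (-x) ^ (k - (j : ℕ)) else 0) with hg
  trans (∑ k ∈ Finset.range (n + 1), g k)
  · exact Fin.sum_univ_eq_sum_range g (n + 1)
  by_cases hji : (j : ℕ) ≤ (i : ℕ)
  · have hsub : Finset.Icc (j : ℕ) (i : ℕ) ⊆ Finset.range (n + 1) := by
      intro k hk
      rw [Finset.mem_Icc] at hk
      rw [Finset.mem_range]
      omega
    rw [← Finset.sum_subset hsub (fun k hk hnk => by
      simp only [Finset.mem_Icc, not_and_or, not_le] at hnk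
      have : ¬ k ≤ (i : ℕ) ∨ ¬ (j : ℕ) ≤ k := by omega
      rcases this with h | h <;> simp [hg, h])]
    have hterm : ∀ k ∈ Finset.Icc (j : ℕ) (i : ℕ),
        g k = ((i : ℕ).choose (j : ℕ) : ℝ) * x ^ ((i : ℕ) - (j : ℕ)) *
          ((-1 : ℝ) ^ (k - (j : ℕ)) * (((i : ℕ) - (j : ℕ)).choose (k - (j : ℕ)) : ℝ)) := by
      intro k hk
      rw [Finset.mem_Icc] at hk
      obtain ⟨h1, h2⟩ := hk
      simp only [hg, if_pos h2, if_pos h1]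
      have hch := Nat.choose_mul (n := (i : ℕ)) h1
      have hpow : (-x) ^ (k - (j : ℕ)) = (-1 : ℝ) ^ (k - (j : ℕ)) * x ^ (k - (j : ℕ)) := by
        rw [neg_pow]
      have hx : x ^ ((i : ℕ) - k) * x ^ (k - (j : ℕ)) = x ^ ((i : ℕ) - (j : ℕ)) := by
        rw [← pow_add]
        congr 1
        omega
      have hchR : ((i : ℕ).choose k : ℝ) * (k.choose (j : ℕ) : ℝ)
          = ((i : ℕ).choose (j : ℕ) : ℝ) * (((i : ℕ) - (j : ℕ)).choose (k - (j : ℕ)) : ℝ) := by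
        exact_mod_cast congrArg (fun z : ℕ => (z : ℝ)) hch
      calc ((i : ℕ).choose k : ℝ) * x ^ ((i : ℕ) - k) *
            ((k.choose (j : ℕ) : ℝ) * (-x) ^ (k - (j : ℕ)))
          = ((i : ℕ).choose k : ℝ) * (k.choose (j : ℕ) : ℝ) *
            (x ^ ((i : ℕ) - k) * x ^ (k - (j : ℕ))) * (-1 : ℝ) ^ (k - (j : ℕ)) := by
            rw [hpow]; ring
        _ = _ := by rw [hx, hchR]; ring
    rw [Finset.sum_congr rfl hterm, ← Finset.mul_sum]
    have hreix : (∑ k ∈ Finset.Icc (j : ℕ) (i : ℕ),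
        (-1 : ℝ) ^ (k - (j : ℕ)) * (((i : ℕ) - (j : ℕ)).choose (k - (j : ℕ)) : ℝ))
        = ∑ m ∈ Finset.range ((i : ℕ) - (j : ℕ) + 1),
            (-1 : ℝ) ^ m * (((i : ℕ) - (j : ℕ)).choose m : ℝ) := by
      rw [show Finset.Icc (j : ℕ) (i : ℕ) = Finset.Ico (j : ℕ) ((i : ℕ) + 1) by
        rw [Finset.Ico_add_one_right_eq_Icc], Finset.sum_Ico_eq_sum_range]
      apply Finset.sum_congr (by congr 1; omega)
      intro m _
      have hm : (j : ℕ) + m - (j : ℕ) = m := by omega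
      rw [hm]
    rw [hreix, real_alt_sum]
    by_cases hij : i = j
    · subst hij
      simp
    · have hne : (i : ℕ) - (j : ℕ) ≠ 0 := by
        have : (i : ℕ) ≠ (j : ℕ) := fun h => hij (Fin.ext h)
        omega
      rw [if_neg hne, if_neg hij, mul_zero]
  · have hij : i ≠ j := fun h => hji (by rw [h])
    rw [if_neg hij]
    apply Finset.sum_eq_zero
    intro k _
    by_cases h1 : k ≤ (i : ℕ)
    · have h2 : ¬ (j : ℕ) ≤ k := by omega
      simp [hg, h2]
    · simp [hg, h1]

lemma smat_mul_pascal (n : ℕ) (x : ℝ) :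
    Smat n x * PascalFunctional n x = PascalOneElim n x := by
  ext i j
  rw [Matrix.mul_apply]
  simp only [Smat, PascalFunctional, PascalOneElim, Matrix.of_apply]
  set g : ℕ → ℝ := fun k =>
    (if k ≤ (i : ℕ) then x ^ ((i : ℕ) - k) else 0) *
    (if (j : ℕ) ≤ k then (k.choose (j : ℕ) : ℝ) * x ^ (k - (j : ℕ)) else 0) with hg
  trans (∑ k ∈ Finset.range (n + 1), g k)
  · exact Fin.sum_univ_eq_sum_range g (n + 1)
  by_cases hji : (j : ℕ) ≤ (i : ℕ)
  · rw [if_pos hji]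
    have hsub : Finset.Icc (j : ℕ) (i : ℕ) ⊆ Finset.range (n + 1) := by
      intro k hk
      rw [Finset.mem_Icc] at hk
      rw [Finset.mem_range]
      omega
    rw [← Finset.sum_subset hsub (fun k hk hnk => by
      simp only [Finset.mem_Icc, not_and_or, not_le] at hnk
      have : ¬ k ≤ (i : ℕ) ∨ ¬ (j : ℕ) ≤ k := by omega
      rcases this with h | h <;> simp [hg, h])]
    have hterm : ∀ k ∈ Finset.Icc (j : ℕ) (i : ℕ),
        g k = (k.choose (j : ℕ) : ℝ) * x ^ ((i : ℕ) - (j : ℕ)) := by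
      intro k hk
      rw [Finset.mem_Icc] at hk
      obtain ⟨h1, h2⟩ := hk
      simp only [hg, if_pos h2, if_pos h1]
      have hx : x ^ ((i : ℕ) - k) * x ^ (k - (j : ℕ)) = x ^ ((i : ℕ) - (j : ℕ)) := by
        rw [← pow_add]
        congr 1
        omega
      calc x ^ ((i : ℕ) - k) * ((k.choose (j : ℕ) : ℝ) * x ^ (k - (j : ℕ)))
          = (k.choose (j : ℕ) : ℝ) * (x ^ ((i : ℕ) - k) * x ^ (k - (j : ℕ))) := by ring
        _ = _ := by rw [hx]
    rw [Finset.sum_congr rfl hterm, ← Finset.sum_mul]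
    congr 1
    rw [← Nat.cast_sum, Nat.sum_Icc_choose]
  · rw [if_neg hji]
    apply Finset.sum_eq_zero
    intro k _
    by_cases h1 : k ≤ (i : ℕ)
    · have h2 : ¬ (j : ℕ) ≤ k := by omega
      simp [hg, h2]
    · simp [hg, h1]

/-- `S_n[x] = P_{n,1}[x] · P_n[-x]`. -/
theorem Smat_eq_pascalOneElim_mul_pascal (n : ℕ) (x : ℝ) :
    Smat n x = PascalOneElim n x * PascalFunctional n (-x) := by
  rw [← smat_mul_pascal n x, Matrix.mul_assoc, pascal_mul_pascal_neg, Matrix.mul_one]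
end

section
/- For all natural numbers i ≥ k ≥ 0, Σ_{j=k}^{i} (−1)^{j−k} · C(i+1, j+1) · C(j, k) = 1. -/
open Finset

/-- The entrywise form of the factorization `S_n[x] = P_{n,1}[x]·P_n[-x]`:
for `i ≥ k ≥ 0`, `Σ_{j=k}^{i} (-1)^{j-k} · C(i+1, j+1) · C(j, k) = 1`. -/
theorem alternating_pascal_sum (i k : ℕ) (hki : k ≤ i) :
    ∑ j ∈ Finset.Icc k i,
      (-1 : ℤ) ^ (j - k) * (Nat.choose (i + 1) (j + 1) : ℤ) * (Nat.choose j k : ℤ) = 1 := by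
  induction i, hki using Nat.le_induction with
  | base => simp
  | succ i hki ih =>
    have hsplit : ∀ j ∈ Finset.Icc k (i + 1),
        (-1 : ℤ) ^ (j - k) * (Nat.choose (i + 2) (j + 1) : ℤ) * (Nat.choose j k : ℤ) =
        (-1 : ℤ) ^ (j - k) * (Nat.choose (i + 1) j : ℤ) * (Nat.choose j k : ℤ) +
        (-1 : ℤ) ^ (j - k) * (Nat.choose (i + 1) (j + 1) : ℤ) * (Nat.choose j k : ℤ) := by
      intro j _
      rw [Nat.choose_succ_succ (i + 1) j]
      push_cast
      ring
    rw [Finset.sum_congr rfl hsplit, Finset.sum_add_distrib]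
    have h2 : ∑ j ∈ Finset.Icc k (i + 1),
        (-1 : ℤ) ^ (j - k) * (Nat.choose (i + 1) (j + 1) : ℤ) * (Nat.choose j k : ℤ) = 1 := by
      rw [Finset.sum_Icc_succ_top (by omega : k ≤ i + 1)]
      simp [ih, Nat.choose_eq_zero_of_lt (by omega : i + 1 < i + 2)]
    have h1 : ∑ j ∈ Finset.Icc k (i + 1),
        (-1 : ℤ) ^ (j - k) * (Nat.choose (i + 1) j : ℤ) * (Nat.choose j k : ℤ) = 0 := by
      have hterm : ∀ j ∈ Finset.Icc k (i + 1),
          (-1 : ℤ) ^ (j - k) * (Nat.choose (i + 1) j : ℤ) * (Nat.choose j k : ℤ) =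
          (Nat.choose (i + 1) k : ℤ) *
            ((-1 : ℤ) ^ (j - k) * (Nat.choose (i + 1 - k) (j - k) : ℤ)) := by
        intro j hj
        simp only [Finset.mem_Icc] at hj
        have := Nat.choose_mul (n := i + 1) (k := j) (s := k) hj.1
        have h' : ((Nat.choose (i + 1) j : ℤ)) * (Nat.choose j k : ℤ) =
            (Nat.choose (i + 1) k : ℤ) * (Nat.choose (i + 1 - k) (j - k) : ℤ) := by
          exact_mod_cast this
        linear_combination (-1 : ℤ) ^ (j - k) * h'
      rw [Finset.sum_congr rfl hterm, ← Finset.mul_sum]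
      have hre : ∑ j ∈ Finset.Icc k (i + 1),
          ((-1 : ℤ) ^ (j - k) * (Nat.choose (i + 1 - k) (j - k) : ℤ)) =
          ∑ t ∈ Finset.range (i + 2 - k),
          ((-1 : ℤ) ^ t * (Nat.choose (i + 1 - k) t : ℤ)) := by
        rw [← Finset.Ico_add_one_right_eq_Icc, Finset.sum_Ico_eq_sum_range]
        apply Finset.sum_congr (by congr 1) (by intro t _; rw [Nat.add_sub_cancel_left])
      rw [hre]
      have := Int.alternating_sum_range_choose (n := i + 1 - k)
      have hn : i + 1 - k ≠ 0 := by omega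
      rw [if_neg hn] at this
      have hr : i + 2 - k = (i + 1 - k) + 1 := by omega
      rw [hr, this, mul_zero]
    rw [h1, h2, zero_add]
end

section
/- Define polynomials T_k over ℝ by T_0 = 1, T_1 = 1 + X, and T_{k+1} = (2 + X)·T_k − T_{k-1} for k ≥ 1 (the transfer polynomials of an electrical ladder network). Then for every n ≥ 0, T_n has degree n and its coefficient of X^m equals the binomial coefficient C(n+m, 2m) for every 0 ≤ m ≤ n. -/
open Polynomial

lemma choose_key (n j : ℕ) :
    (n+2).choose (j+2) + n.choose (j+2) = 2 * (n+1).choose (j+2) + n.choose j := by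
  have h1 : (n+2).choose (j+2) = (n+1).choose (j+1) + (n+1).choose (j+2) :=
    Nat.choose_succ_succ _ _
  have h2 : (n+1).choose (j+2) = n.choose (j+1) + n.choose (j+2) :=
    Nat.choose_succ_succ _ _
  have h3 : (n+1).choose (j+1) = n.choose j + n.choose (j+1) :=
    Nat.choose_succ_succ _ _
  omega

/-- The transfer polynomials of an electrical ladder network, defined by `T_0 = 1`,
`T_1 = 1 + X`, `T_{k+1} = (2 + X)·T_k − T_{k-1}`, have degree `n` and coefficients
given by binomial coefficients: the coefficient of `X^m` in `T_n` is `C(n+m, 2m)`. -/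
theorem ladder_transfer_polynomial_coeffs
    (T : ℕ → Polynomial ℝ)
    (hT0 : T 0 = 1)
    (hT1 : T 1 = 1 + Polynomial.X)
    (hTrec : ∀ k : ℕ, 1 ≤ k → T (k + 1) = (2 + Polynomial.X) * T k - T (k - 1)) :
    ∀ n : ℕ, (T n).degree = (n : ℕ) ∧
      ∀ m : ℕ, m ≤ n → (T n).coeff m = (Nat.choose (n + m) (2 * m) : ℝ) := by
  have H : ∀ n m : ℕ, (T n).coeff m = (Nat.choose (n + m) (2 * m) : ℝ) := by
    intro n
    induction n using Nat.strong_induction_on with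
    | _ n ih =>
      match n with
      | 0 =>
        intro m
        rw [hT0]
        match m with
        | 0 => simp
        | (m+1) =>
          rw [Polynomial.coeff_one]
          rw [Nat.choose_eq_zero_of_lt (by omega)]
          simp
      | 1 =>
        intro m
        rw [hT1]
        match m with
        | 0 => simp
        | 1 => simp [Polynomial.coeff_one]
        | (m+2) =>
          rw [Nat.choose_eq_zero_of_lt (by omega)]
          simp [Polynomial.coeff_one, Polynomial.coeff_X]
      | (k+2) =>
        intro m
        rw [show k+2 = (k+1)+1 from rfl, hTrec (k+1) (by omega), add_mul, two_mul,
          coeff_sub, coeff_add, coeff_add]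
        simp only [Nat.add_sub_cancel]
        match m with
        | 0 =>
          rw [ih (k+1) (by omega), ih k (by omega)]
          simp [Polynomial.mul_coeff_zero]
        | (m+1) =>
          rw [Polynomial.coeff_X_mul, ih (k+1) (by omega), ih (k+1) (by omega),
            ih k (by omega)]
          have := choose_key (k+m+1) (2*m)
          have e1 : k + 1 + (m + 1) = k + m + 1 + 1 := by omega
          have e2 : k + 1 + m = k + m + 1 := by omega
          have e3 : k + 2 + (m + 1) = k + m + 1 + 2 := by omega
          have e4 : k + (m + 1) = k + m + 1 := by omega
          have e5 : 2 * (m + 1) = 2 * m + 2 := by omega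
          rw [e1, e2, e3, e4, e5]
          have this2 := congrArg (Nat.cast : ℕ → ℝ) this
          push_cast at this2 ⊢
          linarith
  intro n
  have hhi : ∀ m : ℕ, n < m → (T n).coeff m = 0 := by
    intro m hm
    rw [H n m, Nat.choose_eq_zero_of_lt (by omega)]
    simp
  have hn : (T n).coeff n = 1 := by
    rw [H n n, show 2 * n = n + n from by omega, Nat.choose_self]
    simp
  constructor
  · apply le_antisymm
    · exact (Polynomial.degree_le_iff_coeff_zero _ _).2 (by
        intro m hm
        exact hhi m (by exact_mod_cast hm))
    · exact Polynomial.le_degree_of_ne_zero (by rw [hn]; norm_num)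
  · intro m _; exact H n m
end

section
/- For all natural numbers n and k with n ≥ k ≥ 1, the binomial identity C(n+k, 2k+1) = Σ_{l=k-1}^{n-1} (n−l) · C(l+k−1, 2k−1) holds. -/
open Finset

lemma mnt_hockey (k : ℕ) (hk : 1 ≤ k) (n : ℕ) (hkn : k ≤ n) :
    ∑ l ∈ Finset.Icc (k - 1) n, Nat.choose (l + k - 1) (2 * k - 1) =
      Nat.choose (n + k) (2 * k) := by
  induction n, hkn using Nat.le_induction with
  | base =>
    have hset : Finset.Icc (k - 1) k = {k - 1, k} := by
      ext x; simp [Finset.mem_Icc]; omega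
    rw [hset, Finset.sum_pair (by omega)]
    rw [Nat.choose_eq_zero_of_lt (by omega)]
    rw [show k + k - 1 = 2 * k - 1 by omega, show k + k = 2 * k by omega,
      Nat.choose_self, Nat.choose_self]
  | succ n hn ih =>
    rw [Finset.sum_Icc_succ_top (by omega), ih]
    have hcs := Nat.choose_succ_succ (n + k) (2 * k - 1)
    simp only [Nat.succ_eq_add_one] at hcs
    rw [show 2 * k - 1 + 1 = 2 * k by omega] at hcs
    rw [show n + 1 + k - 1 = n + k by omega, show n + 1 + k = n + k + 1 by omega]
    omega

/-- For `n ≥ k ≥ 1`, `C(n+k, 2k+1) = Σ_{l=k-1}^{n-1} (n−l)·C(l+k−1, 2k−1)`: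
the modified numerical triangle (MNT) satisfies the generalized vertical recurrence
with associated sequence `λ(n) = n + 1`. -/
theorem mnt_vertical_recurrence (n k : ℕ) (hk : 1 ≤ k) (hkn : k ≤ n) :
    Nat.choose (n + k) (2 * k + 1) =
      ∑ l ∈ Finset.Icc (k - 1) (n - 1), (n - l) * Nat.choose (l + k - 1) (2 * k - 1) := by
  induction n, hkn using Nat.le_induction with
  | base =>
    rw [show Finset.Icc (k-1) (k-1) = {k-1} by simp, Finset.sum_singleton]
    rw [Nat.choose_eq_zero_of_lt (by omega), Nat.choose_eq_zero_of_lt (by omega)]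
    ring
  | succ n hn ih =>
    have hicc : (n + 1) - 1 = (n - 1) + 1 := by omega
    rw [hicc, Finset.sum_Icc_succ_top (by omega)]
    have htop : (n - 1) + 1 = n := by omega
    rw [htop]
    have hsum : ∑ l ∈ Finset.Icc (k - 1) (n - 1),
        (n + 1 - l) * Nat.choose (l + k - 1) (2 * k - 1) =
        ∑ l ∈ Finset.Icc (k - 1) (n - 1),
        ((n - l) * Nat.choose (l + k - 1) (2 * k - 1) + Nat.choose (l + k - 1) (2 * k - 1)) := by
      apply Finset.sum_congr rfl
      intro l hl
      simp only [Finset.mem_Icc] at hl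
      have : n + 1 - l = (n - l) + 1 := by omega
      rw [this]; ring
    rw [hsum, Finset.sum_add_distrib, ← ih]
    have hhock : ∑ l ∈ Finset.Icc (k - 1) (n - 1), Nat.choose (l + k - 1) (2 * k - 1) +
        (n + 1 - n) * Nat.choose (n + k - 1) (2 * k - 1) =
        ∑ l ∈ Finset.Icc (k - 1) n, Nat.choose (l + k - 1) (2 * k - 1) := by
      rw [show n = (n - 1) + 1 by omega, Finset.sum_Icc_succ_top (by omega)]
      rw [show (n - 1) + 1 = n by omega]
      have : n + 1 - n = 1 := by omega
      rw [this, one_mul]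
    have := mnt_hockey k hk n hn
    have hcs := Nat.choose_succ_succ (n + k) (2 * k)
    simp only [Nat.succ_eq_add_one] at hcs
    rw [show n + 1 + k = n + k + 1 by omega]
    omega
end

section
/- For all natural numbers n and k with n ≥ k ≥ 1, the binomial identity C(n+k, 2k) = Σ_{l=k-1}^{n-1} (n−l) · C(l+k−1, 2k−2) holds. -/
open Finset

theorem hockey_shift (m n : ℕ) (h : m ≤ n) :
    ∑ l ∈ Icc m n, Nat.choose (l + m) (2 * m) = Nat.choose (n + m + 1) (2 * m + 1) := by
  have := Nat.sum_Icc_choose (n + m) (2 * m)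
  rw [← this]
  rw [show (Icc (2*m) (n+m)) = (Icc m n).map (addRightEmbedding m) by
    rw [Finset.map_add_right_Icc]; congr 1; omega]
  rw [Finset.sum_map]
  rfl

/-- For `n ≥ k ≥ 1`, `C(n+k, 2k) = Σ_{l=k-1}^{n-1} (n−l)·C(l+k−1, 2k−2)`:
the coefficient triangle of the ladder-network transfer polynomials is a
vertically-recurrent matrix with associated sequence `λ(n) = n + 1`. -/
theorem transfer_triangle_vertical_recurrence (n k : ℕ) (hk : 1 ≤ k) (hkn : k ≤ n) :
    Nat.choose (n + k) (2 * k) =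
      ∑ l ∈ Finset.Icc (k - 1) (n - 1), (n - l) * Nat.choose (l + k - 1) (2 * k - 2) := by
  obtain ⟨m, rfl⟩ : ∃ m, k = m + 1 := ⟨k - 1, (Nat.succ_pred_eq_of_pos hk).symm⟩
  simp only [Nat.add_sub_cancel, Nat.add_succ_sub_one,
    show 2 * (m + 1) - 2 = 2 * m from by omega]
  induction n, hkn using Nat.le_induction with
  | base =>
    rw [Nat.add_sub_cancel, Finset.Icc_self, Finset.sum_singleton]
    simp [Nat.choose_self, two_mul, show 2 * (m+1) = m + 1 + (m+1) from by ring,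
      show m + 1 - m = 1 from by omega]
  | succ n hn ih =>
    have key : ∑ l ∈ Icc m n, (n + 1 - l) * Nat.choose (l + m) (2 * m)
        = (∑ l ∈ Icc m (n - 1), (n - l) * Nat.choose (l + m) (2 * m))
          + Nat.choose (n + m + 1) (2 * m + 1) := by
      have h1 : ∑ l ∈ Icc m n, (n + 1 - l) * Nat.choose (l + m) (2 * m)
          = (∑ l ∈ Icc m n, (n - l) * Nat.choose (l + m) (2 * m))
            + ∑ l ∈ Icc m n, Nat.choose (l + m) (2 * m) := by
        rw [← Finset.sum_add_distrib]
        refine Finset.sum_congr rfl fun l hl => ?_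
        have hln : l ≤ n := (Finset.mem_Icc.mp hl).2
        rw [show n + 1 - l = (n - l) + 1 from by omega, add_mul, one_mul]
      have h2 : Icc m n = insert n (Icc m (n-1)) := by
        ext x; simp only [Finset.mem_insert, Finset.mem_Icc]; omega
      rw [h1, hockey_shift m n (by omega), h2,
        Finset.sum_insert (by simp only [Finset.mem_Icc]; omega),
        Nat.sub_self, zero_mul, zero_add]
    rw [Nat.add_sub_cancel, key, ← ih,
      show n + 1 + (m + 1) = (n + m + 1) + 1 from by ring,
      show 2 * (m + 1) = (2 * m + 1) + 1 from by ring,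
      Nat.choose_succ_succ, show n + (m + 1) = n + m + 1 from by ring]
    ring
end

section
/- For all natural numbers n and k with n ≥ k ≥ 1, the binomial identity C(n+2k, 3k+1) = Σ_{l=k-1}^{n-1} C(n−l+1, 2) · C(l+2k−2, 3k−2) holds. -/
open Finset


lemma hockey (r b : ℕ) : ∑ j ∈ range (b+1), (j+r).choose r = (b+r+1).choose (r+1) := by
  induction b with
  | zero => simp
  | succ b ih =>
    rw [Finset.sum_range_succ, ih]
    have h : b + 1 + r + 1 = (b + r + 1) + 1 := by omega
    have h2 : b + 1 + r = b + r + 1 := by omega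
    rw [h, h2, Nat.choose_succ_succ (b + r + 1) r]
    simp only [Nat.succ_eq_add_one]
    omega

lemma key (r c b : ℕ) :
    ∑ j ∈ range (b+1), (j+r).choose r * (b - j + c).choose c
      = (b + r + c + 1).choose (r + c + 1) := by
  induction b generalizing c with
  | zero => simp
  | succ b ihb =>
    induction c with
    | zero =>
      simpa using hockey r (b+1)
    | succ c ihc =>
      rw [Finset.sum_range_succ]
      have hsplit : ∀ j ∈ range (b+1),
          (j+r).choose r * (b + 1 - j + (c+1)).choose (c+1)
            = (j+r).choose r * (b + 1 - j + c).choose c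
              + (j+r).choose r * (b - j + (c+1)).choose (c+1) := by
        intro j hj
        rw [mem_range] at hj
        have h1 : b + 1 - j + (c+1) = (b + 1 - j + c) + 1 := by omega
        have h2 : b + 1 - j + c = (b - j + (c+1)) := by omega
        rw [h1, Nat.choose_succ_succ, Nat.mul_add, h2]
      rw [Finset.sum_congr rfl hsplit, Finset.sum_add_distrib, ihb (c+1)]
      have hfirst : (∑ j ∈ range (b+1), (j+r).choose r * (b + 1 - j + c).choose c)
            + (b + 1 + r).choose r * (b + 1 - (b+1) + (c+1)).choose (c+1)
          = ∑ j ∈ range (b+2), (j+r).choose r * (b + 1 - j + c).choose c := by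
        rw [Finset.sum_range_succ (n := b+1)]
        congr 1
        simp
      have h1 : (∑ j ∈ range (b+1), (j+r).choose r * (b + 1 - j + c).choose c)
            + (b + 1 + r).choose r * (b + 1 - (b+1) + (c+1)).choose (c+1)
          = (b + 1 + r + c + 1).choose (r + c + 1) := hfirst.trans ihc
      have pas : (b + 1 + r + (c + 1) + 1).choose (r + (c + 1) + 1)
          = (b + 1 + r + c + 1).choose (r + c + 1) + (b + r + (c + 1) + 1).choose (r + (c + 1) + 1) := by
        have e1 : b + 1 + r + (c + 1) + 1 = (b + 1 + r + c + 1) + 1 := by omega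
        have e2 : r + (c + 1) + 1 = (r + c + 1) + 1 := by omega
        have e3 : b + r + (c + 1) + 1 = b + 1 + r + c + 1 := by omega
        rw [e1, e2, e3, Nat.choose_succ_succ]
      omega


/-- For `n ≥ k ≥ 1`, `C(n+2k, 3k+1) = Σ_{l=k-1}^{n-1} C(n−l+1, 2)·C(l+2k−2, 3k−2)`:
the second modified numerical triangle `MNT₂` satisfies the generalized vertical
recurrence with associated sequence `λ(n) = C(n+2, 2)`. -/
theorem mnt2_vertical_recurrence (n k : ℕ) (hk : 1 ≤ k) (hkn : k ≤ n) :
    Nat.choose (n + 2 * k) (3 * k + 1) =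
      ∑ l ∈ Finset.Icc (k - 1) (n - 1),
        Nat.choose (n - l + 1) 2 * Nat.choose (l + 2 * k - 2) (3 * k - 2) := by
  have hIcc : Finset.Icc (k - 1) (n - 1) = Finset.Ico (k - 1) n := by
    rw [← Finset.Ico_add_one_right_eq_Icc]
    congr 1
    omega
  rw [hIcc, Finset.sum_Ico_eq_sum_range]
  have hb : n - (k - 1) = (n - k) + 1 := by omega
  rw [hb, Finset.sum_range_succ']
  have h0 : Nat.choose (n - (k - 1 + 0) + 1) 2 * Nat.choose ((k - 1 + 0) + 2 * k - 2) (3 * k - 2) = 0 := by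
    have : (k - 1 + 0) + 2 * k - 2 < 3 * k - 2 := by omega
    rw [Nat.choose_eq_zero_of_lt this, Nat.mul_zero]
  rw [h0, Nat.add_zero]
  rcases Nat.eq_or_lt_of_le hkn with h | h
  · subst h
    simp [Nat.choose_eq_zero_of_lt (by omega : k + 2 * k < 3 * k + 1)]
  · have hterm : ∀ i ∈ range (n - k),
        Nat.choose (n - (k - 1 + (i + 1)) + 1) 2 * Nat.choose ((k - 1 + (i + 1)) + 2 * k - 2) (3 * k - 2)
          = (i + (3 * k - 2)).choose (3 * k - 2) * ((n - k - 1) - i + 2).choose 2 := by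
      intro i hi
      rw [mem_range] at hi
      have e1 : n - (k - 1 + (i + 1)) + 1 = (n - k - 1) - i + 2 := by omega
      have e2 : (k - 1 + (i + 1)) + 2 * k - 2 = i + (3 * k - 2) := by omega
      rw [e1, e2, Nat.mul_comm]
    rw [Finset.sum_congr rfl hterm]
    have hnk : range (n - k) = range ((n - k - 1) + 1) := by
      congr 1
      omega
    rw [hnk, key (3 * k - 2) 2 (n - k - 1)]
    congr 1 <;> omega
end
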